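/- arXiv:2009.11649 — 3 statements merged into one kernel-verified Lean document; each statement's English description precedes it below -/
import Mathlib

section
/- (Theorem 3 of the paper, prescribed-time fully distributed NE seeking with adaptive gains over a fixed graph.) Let c > 0, T > 0, and let A denote the 0/1 adjacency matrix of the connected graph G. Let γ : Fin N → Fin N → ℝ be symmetric with γ i j > 0, and let x : ℝ → (Fin N → X) and κ : Fin N → Fin N → ℝ → ℝ satisfy, for every t ∈ [0, T): for each player i, HasDerivAt x ((c + 1/(T − t)) • (−(fun i => Function.update (0 : X) i ((F̃ (x t)) i) + ∑ j, (κ i j t * A i j) • (x t i − x t j)))) t, and for each pair i j, HasDerivAt (κ i j) ((c + 1/(T − t)) * (γ i j * A i j * ‖x t i − x t j‖²)) t, with symmetric nonnegative initial gains κ i j 0 = κ j i 0 ≥ 0. Then: (1) x(t) converges to ψ̃ in the prescribed time T, i.e. Tendsto x (𝓝[Set.Ico 0 T] T) (𝓝 ψ̃); and (2) each dynamic gain t ↦ κ i j t is monotone nondecreasing on [0, T) and converges to a finite limit as t → T⁻. -/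
noncomputable section

open Filter

/-- `gradi J i x` is the gradient, at `x i`, of the map `y ↦ J i (Function.update x i y)`,
i.e. player `i`'s partial gradient of its own cost with respect to its own action. -/
def gradi {N : ℕ} {d : Fin N → ℕ}
    (J : ∀ _ : Fin N, (PiLp 2 fun i => EuclideanSpace ℝ (Fin (d i))) → ℝ)
    (i : Fin N) (x : PiLp 2 fun i => EuclideanSpace ℝ (Fin (d i))) :
    EuclideanSpace ℝ (Fin (d i)) :=
  gradient (fun y => J i (WithLp.toLp 2 (Function.update x i y))) (x i)

/-- The pseudo-gradient `F`. -/
def Fmap {N : ℕ} {d : Fin N → ℕ}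
    (J : ∀ _ : Fin N, (PiLp 2 fun i => EuclideanSpace ℝ (Fin (d i))) → ℝ)
    (x : PiLp 2 fun i => EuclideanSpace ℝ (Fin (d i))) :
    PiLp 2 fun i => EuclideanSpace ℝ (Fin (d i)) :=
  WithLp.toLp 2 (fun i => gradi J i x)

/-- The extended pseudo-gradient `F̃`. -/
def Ftil {N : ℕ} {d : Fin N → ℕ}
    (J : ∀ _ : Fin N, (PiLp 2 fun i => EuclideanSpace ℝ (Fin (d i))) → ℝ)
    (ψ : Fin N → PiLp 2 fun i => EuclideanSpace ℝ (Fin (d i))) :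
    PiLp 2 fun i => EuclideanSpace ℝ (Fin (d i)) :=
  WithLp.toLp 2 (fun i => gradi J i (ψ i))

/-- The augmented game map `𝒜`. -/
def Amap {N : ℕ} {d : Fin N → ℕ}
    (J : ∀ _ : Fin N, (PiLp 2 fun i => EuclideanSpace ℝ (Fin (d i))) → ℝ)
    (G : SimpleGraph (Fin N)) [DecidableRel G.Adj] (κ : ℝ)
    (ψ : PiLp 2 fun _ : Fin N => PiLp 2 fun i => EuclideanSpace ℝ (Fin (d i))) :
    PiLp 2 fun _ : Fin N => PiLp 2 fun i => EuclideanSpace ℝ (Fin (d i)) :=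
  WithLp.toLp 2 (fun i => (show PiLp 2 (fun i => EuclideanSpace ℝ (Fin (d i))) from
      WithLp.toLp 2 (Function.update (0 : PiLp 2 fun i => EuclideanSpace ℝ (Fin (d i))) i (Ftil J ψ i)))
    + κ • ∑ j, SimpleGraph.lapMatrix ℝ G i j • ψ j)

/-!
Rescaling time by `τ = c t - log (T - t)`, which maps `[0, T)` onto `[0, ∞)`, turns the
prescribed-time dynamics into the standard adaptive consensus-based Nash-seeking flow. Along it the
Lyapunov function `‖x - 1 ⊗ x⋆‖² / 2 + ∑ (κᵢⱼ - k)² / (4 γᵢⱼ)` is nonincreasing once `k` exceeds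
`(ε + 2ι + 4ι² / ε) / λ`, where `λ > 0` is the spectral gap of the connected graph: strong
monotonicity controls the consensus component of the error and the gap controls the disagreement.
Hence the nondecreasing gains stay bounded and converge, and `‖x - 1 ⊗ x⋆‖²` has finite integral
in `τ` while growing at a bounded rate, so it tends to `0` as `τ → ∞`, that is, as `t → T`.
-/

open Set Topology
open scoped RealInnerProductSpace

section Calculus

variable {D : Set ℝ} {f f' : ℝ → ℝ}

theorem monotoneOn_of_hasDerivAt_nonneg (hD : Convex ℝ D)
    (hf : ∀ t ∈ D, HasDerivAt f (f' t) t) (hf' : ∀ t ∈ D, 0 ≤ f' t) : MonotoneOn f D :=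
  monotoneOn_of_hasDerivWithinAt_nonneg hD
    (fun t ht => (hf t ht).continuousAt.continuousWithinAt)
    (fun t ht => (hf t (interior_subset ht)).hasDerivWithinAt)
    fun t ht => hf' t (interior_subset ht)

theorem antitoneOn_of_hasDerivAt_nonpos (hD : Convex ℝ D)
    (hf : ∀ t ∈ D, HasDerivAt f (f' t) t) (hf' : ∀ t ∈ D, f' t ≤ 0) : AntitoneOn f D :=
  antitoneOn_of_hasDerivWithinAt_nonpos hD
    (fun t ht => (hf t ht).continuousAt.continuousWithinAt)
    (fun t ht => (hf t (interior_subset ht)).hasDerivWithinAt)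
    fun t ht => hf' t (interior_subset ht)

theorem eqOn_Ico_of_hasDerivAt_eq {a b : ℝ} {g : ℝ → ℝ}
    (hf : ∀ t ∈ Ico a b, HasDerivAt f (f' t) t) (hg : ∀ t ∈ Ico a b, HasDerivAt g (f' t) t)
    (ha : f a = g a) : EqOn f g (Ico a b) := by
  intro t ht
  have hsub : Icc a t ⊆ Ico a b := Icc_subset_Ico_right ht.2
  refine eq_of_has_deriv_right_eq
    (fun s hs => (hf s (hsub (Ico_subset_Icc_self hs))).hasDerivWithinAt)
    (fun s hs => (hg s (hsub (Ico_subset_Icc_self hs))).hasDerivWithinAt)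
    (fun s hs => (hf s (hsub hs)).continuousAt.continuousWithinAt)
    (fun s hs => (hg s (hsub hs)).continuousAt.continuousWithinAt) ha t ⟨ht.1, le_rfl⟩

theorem exists_tendsto_nhdsLT_of_monotoneOn_Ico {a T B : ℝ} (haT : a < T)
    (hf : MonotoneOn f (Ico a T)) (hB : ∀ t ∈ Ico a T, f t ≤ B) :
    ∃ l, Tendsto f (𝓝[<] T) (𝓝 l) :=
  ⟨_, (hf.mono Ioo_subset_Ico_self).tendsto_nhdsWithin_Ioo_left (nonempty_Ioo.2 haT)
    ⟨B, forall_mem_image.2 fun t ht => hB t (Ioo_subset_Ico_self ht)⟩⟩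

theorem exists_tendsto_nhdsLT_of_antitoneOn_Ico {a T : ℝ} (haT : a < T)
    (hf : AntitoneOn f (Ico a T)) (hf₀ : ∀ t ∈ Ico a T, 0 ≤ f t) :
    ∃ l, Tendsto f (𝓝[<] T) (𝓝 l) ∧ ∀ t ∈ Ico a T, l ≤ f t := by
  have hlim := (hf.mono Ioo_subset_Ico_self).tendsto_nhdsWithin_Ioo_left (nonempty_Ioo.2 haT)
    ⟨0, forall_mem_image.2 fun t ht => hf₀ t (Ioo_subset_Ico_self ht)⟩
  refine ⟨_, hlim, fun t ht => le_of_tendsto hlim ?_⟩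
  filter_upwards [Ioo_mem_nhdsLT ht.2] with s hs
  exact hf ht ⟨ht.1.trans hs.1.le, hs.2⟩ hs.1.le

end Calculus

section Dissipation

variable {D : Set ℝ} {a T K r : ℝ} {τ μ P P' V V' : ℝ → ℝ}

theorem add_mul_sub_le_of_dissipation {s t η : ℝ} (hst : s ≤ t) (hD : Icc s t ⊆ D)
    (hK : 0 ≤ K) (hr : 0 ≤ r)
    (hτ : ∀ u ∈ D, HasDerivAt τ (μ u) u) (hμ : ∀ u ∈ D, 0 ≤ μ u)
    (hP : ∀ u ∈ D, HasDerivAt P (P' u) u) (hP' : ∀ u ∈ D, P' u ≤ K * μ u)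
    (hV : ∀ u ∈ D, HasDerivAt V (V' u) u) (hV' : ∀ u ∈ D, V' u ≤ -(r * μ u * P u))
    (hPt : η ≤ P t) (hτst : K * (τ t - τ s) ≤ η / 2) :
    V t + r * (η / 2) * (τ t - τ s) ≤ V s := by
  have hτ_mono : MonotoneOn τ (Icc s t) := monotoneOn_of_hasDerivAt_nonneg (convex_Icc s t)
    (fun u hu => hτ u (hD hu)) fun u hu => hμ u (hD hu)
  have hP_growth : MonotoneOn (fun u => K * τ u - P u) (Icc s t) :=
    monotoneOn_of_hasDerivAt_nonneg (convex_Icc s t)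
      (fun u hu => ((hτ u (hD hu)).const_mul K).sub (hP u (hD hu)))
      fun u hu => sub_nonneg.2 (hP' u (hD hu))
  have hP_large : ∀ u ∈ Icc s t, η / 2 ≤ P u := fun u hu => by
    have h₁ : K * τ u - P u ≤ K * τ t - P t := hP_growth hu ⟨hst, le_rfl⟩ hu.2
    have h₂ : K * τ s ≤ K * τ u :=
      mul_le_mul_of_nonneg_left (hτ_mono ⟨le_rfl, hst⟩ hu hu.1) hK
    linarith
  have h_diss : AntitoneOn (fun u => V u + r * (η / 2) * τ u) (Icc s t) :=
    antitoneOn_of_hasDerivAt_nonpos (convex_Icc s t)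
      (fun u hu => (hV u (hD hu)).add ((hτ u (hD hu)).const_mul _)) fun u hu => by
        have := hV' u (hD hu)
        have := mul_nonneg (mul_nonneg hr (hμ u (hD hu))) (sub_nonneg.2 (hP_large u hu))
        linarith
  have := h_diss ⟨le_rfl, hst⟩ ⟨hst, le_rfl⟩ hst
  simp only at this
  linarith

/-- Barbalat's lemma in the time scale `dτ = μ dt`: `V' ≤ -r μ P` bounds the `τ`-integral of `P`,
and `P' ≤ K μ` keeps `P` from spiking in `τ`-time. -/
theorem tendsto_zero_of_dissipation (haT : a < T) (hr : 0 < r)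
    (hτ : ∀ t ∈ Ico a T, HasDerivAt τ (μ t) t) (hμ : ∀ t ∈ Ico a T, 0 ≤ μ t)
    (hτ_top : Tendsto τ (𝓝[<] T) atTop)
    (hP : ∀ t ∈ Ico a T, HasDerivAt P (P' t) t) (hP' : ∀ t ∈ Ico a T, P' t ≤ K * μ t)
    (hP₀ : ∀ t ∈ Ico a T, 0 ≤ P t)
    (hV : ∀ t ∈ Ico a T, HasDerivAt V (V' t) t)
    (hV' : ∀ t ∈ Ico a T, V' t ≤ -(r * μ t * P t)) (hV₀ : ∀ t ∈ Ico a T, 0 ≤ V t) :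
    Tendsto P (𝓝[<] T) (𝓝 0) := by
  obtain ⟨K, hK, hP'⟩ : ∃ K > 0, ∀ t ∈ Ico a T, P' t ≤ K * μ t :=
    ⟨max K 1, by positivity, fun t ht =>
      (hP' t ht).trans (mul_le_mul_of_nonneg_right (le_max_left _ _) (hμ t ht))⟩
  have hV_anti : AntitoneOn V (Ico a T) := antitoneOn_of_hasDerivAt_nonpos (convex_Ico a T) hV
    fun t ht => (hV' t ht).trans <| neg_nonpos.2 <| by
      have := hμ t ht; have := hP₀ t ht; positivity
  obtain ⟨ℓ, hVℓ, hℓV⟩ := exists_tendsto_nhdsLT_of_antitoneOn_Ico haT hV_anti hV₀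
  refine tendsto_order.2 ⟨fun b hb => ?_, fun η hη => ?_⟩
  · filter_upwards [Ico_mem_nhdsLT haT] with t ht using hb.trans_le (hP₀ t ht)
  set m := η / (2 * K)
  have hm : 0 < m := by positivity
  have hKm : K * m = η / 2 := by simp only [m]; field_simp
  obtain ⟨t₀, hVt₀, ht₀⟩ := ((hVℓ.eventually (gt_mem_nhds (lt_add_of_pos_right ℓ
    (by positivity : 0 < r * (η / 2) * m)))).and (Ico_mem_nhdsLT haT)).exists
  filter_upwards [Ioo_mem_nhdsLT ht₀.2, hτ_top.eventually_ge_atTop (τ t₀ + m)] with t ht hτt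
  by_contra! hPt
  have hsub : Icc t₀ t ⊆ Ico a T := fun u hu => ⟨ht₀.1.trans hu.1, hu.2.trans_lt ht.2⟩
  -- Going back from `t` by `m` in `τ`-time, `P ≥ η / 2` dissipates `r η m / 2` of `V`,
  -- more than `V` has left to lose after `t₀`.
  obtain ⟨s, hs, hτs⟩ : τ t - m ∈ τ '' Icc t₀ t := intermediate_value_Icc ht.1.le
    (fun u hu => (hτ u (hsub hu)).continuousAt.continuousWithinAt) ⟨by linarith, by linarith⟩
  have hdrop := add_mul_sub_le_of_dissipation hs.2 ((Icc_subset_Icc_left hs.1).trans hsub) hK.le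
    hr.le hτ hμ hP hP' hV hV' hPt (by rw [hτs, sub_sub_cancel, hKm])
  rw [hτs, sub_sub_cancel] at hdrop
  linarith [hV_anti ht₀ (hsub hs) hs.1, hℓV t (hsub ⟨ht.1.le, le_rfl⟩)]

end Dissipation

theorem SimpleGraph.adjMatrix_nonneg {V : Type*} (G : SimpleGraph V) [DecidableRel G.Adj]
    (i j : V) : 0 ≤ G.adjMatrix ℝ i j := by
  rw [SimpleGraph.adjMatrix_apply]; split_ifs <;> norm_num

theorem SimpleGraph.adjMatrix_comm {V : Type*} (G : SimpleGraph V) [DecidableRel G.Adj]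
    (i j : V) : G.adjMatrix ℝ i j = G.adjMatrix ℝ j i :=
  (G.isSymm_adjMatrix.apply i j).symm

section DirichletEnergy

open Finset

variable {V E : Type*} [Fintype V] [NormedAddCommGroup E]

def dirichletEnergy (a : V → V → ℝ) (z : V → E) : ℝ :=
  ∑ i, ∑ j, a i j * ‖z i - z j‖ ^ 2

theorem dirichletEnergy_nonneg {a : V → V → ℝ} (ha : ∀ i j, 0 ≤ a i j) (z : V → E) :
    0 ≤ dirichletEnergy a z :=
  sum_nonneg fun i _ => sum_nonneg fun j _ => mul_nonneg (ha i j) (sq_nonneg _)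

theorem sum_sum_mul_inner_sub_eq_half_dirichletEnergy [InnerProductSpace ℝ E] {a : V → V → ℝ}
    (ha : ∀ i j, a i j = a j i) (z : V → E) :
    ∑ i, ∑ j, a i j * ⟪z i, z i - z j⟫ = dirichletEnergy a z / 2 := by
  have hswap :
      ∑ i, ∑ j, a i j * ⟪z i, z i - z j⟫ = ∑ i, ∑ j, a i j * ⟪z j, z j - z i⟫ := by
    rw [sum_comm]
    exact sum_congr rfl fun i _ => sum_congr rfl fun j _ => by rw [ha]
  have hsq : ∀ i j, ‖z i - z j‖ ^ 2 = ⟪z i, z i - z j⟫ + ⟪z j, z j - z i⟫ := by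
    intro i j
    rw [← real_inner_self_eq_norm_sq]
    simp only [inner_sub_left, inner_sub_right, real_inner_comm (z i) (z j)]
    ring
  simp only [dirichletEnergy, hsq, mul_add, sum_add_distrib, ← hswap]
  ring

theorem SimpleGraph.Connected.eq_of_dirichletEnergy_adjMatrix_eq_zero {G : SimpleGraph V}
    [DecidableRel G.Adj] (hG : G.Connected) {z : V → E}
    (hz : dirichletEnergy (G.adjMatrix ℝ) z = 0) (i j : V) : z i = z j := by
  have hA := G.adjMatrix_nonneg
  have hterm : ∀ i j, G.adjMatrix ℝ i j * ‖z i - z j‖ ^ 2 = 0 := fun i j =>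
    (sum_eq_zero_iff_of_nonneg fun j _ => mul_nonneg (hA i j) (sq_nonneg _)).1
      ((sum_eq_zero_iff_of_nonneg fun i _ =>
        sum_nonneg fun j _ => mul_nonneg (hA i j) (sq_nonneg _)).1 hz i (mem_univ i)) j (mem_univ j)
  have hadj : ∀ i j, G.Adj i j → z i = z j := fun i j h => by
    simpa [SimpleGraph.adjMatrix_apply, h, sub_eq_zero] using hterm i j
  obtain ⟨w⟩ := hG.preconnected i j
  induction w with
  | nil => rfl
  | cons h _ ih => exact (hadj _ _ h).trans ih

end DirichletEnergy

section SpectralGap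

theorem exists_pos_mul_norm_sq_le_of_isClosed_cone {W : Type*} [NormedAddCommGroup W]
    [NormedSpace ℝ W] [FiniteDimensional ℝ W] {S : Set W} (hS : IsClosed S)
    (hS_smul : ∀ (r : ℝ), ∀ v ∈ S, r • v ∈ S) {q : W → ℝ} (hq : Continuous q)
    (hq_smul : ∀ (r : ℝ) v, q (r • v) = r ^ 2 * q v)
    (hq_pos : ∀ v ∈ S, v ≠ 0 → 0 < q v) :
    ∃ lam > 0, ∀ v ∈ S, lam * ‖v‖ ^ 2 ≤ q v := by
  obtain ⟨lam, hlam, hmin⟩ := ((isCompact_sphere (0 : W) 1).inter_left hS).exists_forall_le'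
    hq.continuousOn fun v hv => hq_pos v hv.1 (Metric.ne_of_mem_sphere hv.2 one_ne_zero)
  refine ⟨lam, hlam, fun v hv => ?_⟩
  rcases eq_or_ne v 0 with rfl | hv0
  · have hq0 : q 0 = 0 := by simpa using hq_smul 0 0
    simp [hq0]
  have hunit : ‖v‖⁻¹ • v ∈ S ∩ Metric.sphere 0 1 :=
    ⟨hS_smul _ v hv, by simp [norm_smul, hv0]⟩
  have hv_eq : q v = ‖v‖ ^ 2 * q (‖v‖⁻¹ • v) := by
    rw [← hq_smul, smul_smul, mul_inv_cancel₀ (norm_ne_zero_iff.2 hv0), one_smul]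
  rw [hv_eq, mul_comm]
  exact mul_le_mul_of_nonneg_left (hmin _ hunit) (sq_nonneg _)

theorem SimpleGraph.Connected.exists_pos_mul_norm_sq_le_dirichletEnergy {V E : Type*} [Fintype V]
    [NormedAddCommGroup E] [InnerProductSpace ℝ E] [FiniteDimensional ℝ E] {G : SimpleGraph V}
    [DecidableRel G.Adj] (hG : G.Connected) :
    ∃ lam > 0, ∀ δ : PiLp 2 (fun _ : V => E), ∑ i, δ i = 0 →
      lam * ‖δ‖ ^ 2 ≤ dirichletEnergy (G.adjMatrix ℝ) δ := by
  have hA := G.adjMatrix_nonneg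
  refine exists_pos_mul_norm_sq_le_of_isClosed_cone
    (S := {δ : PiLp 2 (fun _ : V => E) | ∑ i, δ i = 0})
    (isClosed_eq (continuous_finsetSum _ fun i _ => PiLp.continuous_apply 2 _ i) continuous_const)
    (fun r δ hδ => by
      simp only [Set.mem_ofPred_eq, PiLp.smul_apply, ← Finset.smul_sum] at hδ ⊢
      rw [hδ, smul_zero]) ?_ ?_ ?_
  · exact continuous_finsetSum _ fun i _ => continuous_finsetSum _ fun j _ => continuous_const.mul
      (((PiLp.continuous_apply 2 _ i).sub (PiLp.continuous_apply 2 _ j)).norm.pow 2)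
  · intro r δ
    simp only [dirichletEnergy, Finset.mul_sum, PiLp.smul_apply, ← smul_sub, norm_smul,
      Real.norm_eq_abs, mul_pow, sq_abs]
    exact Finset.sum_congr rfl fun i _ => Finset.sum_congr rfl fun j _ => by ring
  · intro δ hδ hδ0
    refine (dirichletEnergy_nonneg hA _).lt_of_ne fun h => hδ0 ?_
    ext i
    have hconst := hG.eq_of_dirichletEnergy_adjMatrix_eq_zero h.symm
    have hcard : (Fintype.card V : ℝ) • δ i = 0 := by
      rw [← hδ, Nat.cast_smul_eq_nsmul]
      simp [hconst _ i]
    have : Nonempty V := ⟨i⟩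
    exact (smul_eq_zero.1 hcard).resolve_left (Nat.cast_ne_zero.2 Fintype.card_ne_zero)

end SpectralGap

section Consensus

open Finset

theorem sum_norm_sub_sq_eq_of_sum_sub_eq_zero {ι E : Type*} [Fintype ι] [NormedAddCommGroup E]
    [InnerProductSpace ℝ E] (z : ι → E) {m : E} (hm : ∑ i, (z i - m) = 0) (c : E) :
    ∑ i, ‖z i - c‖ ^ 2 = Fintype.card ι * ‖m - c‖ ^ 2 + ∑ i, ‖z i - m‖ ^ 2 := by
  have h : ∀ i, ‖z i - c‖ ^ 2 = ‖m - c‖ ^ 2 + 2 * ⟪m - c, z i - m⟫ + ‖z i - m‖ ^ 2 :=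
    fun i => by rw [← norm_add_sq_real, sub_add_sub_cancel']
  simp only [h, sum_add_distrib, ← mul_sum, ← inner_sum, hm, inner_zero_right, mul_zero,
    add_zero, sum_const, card_univ, nsmul_eq_mul]

theorem sum_norm_diag_sq_le {ι : Type*} [Fintype ι] {β : ι → Type*}
    [∀ i, NormedAddCommGroup (β i)] (z : PiLp 2 fun _ : ι => PiLp 2 β) :
    ∑ i, ‖z i i‖ ^ 2 ≤ ‖z‖ ^ 2 := by
  rw [PiLp.norm_sq_eq_of_L2]
  exact sum_le_sum fun i _ => pow_le_pow_left₀ (norm_nonneg _) (PiLp.norm_apply_le _ i) 2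

end Consensus

section Game

variable {N : ℕ} {d : Fin N → ℕ}

abbrev Profile (d : Fin N → ℕ) := PiLp 2 fun i => EuclideanSpace ℝ (Fin (d i))

abbrev Estimates (d : Fin N → ℕ) := PiLp 2 fun _ : Fin N => Profile d

def consensus (x : Profile d) : Estimates d := WithLp.toLp 2 fun _ => x

def diagProfile (z : Estimates d) : Profile d := WithLp.toLp 2 fun i => z i i

theorem norm_diagProfile_sub_le (z : Estimates d) (x : Profile d) :
    ‖diagProfile z - x‖ ≤ ‖z - consensus x‖ := by
  refine pow_le_pow_iff_left₀ (norm_nonneg _) (norm_nonneg _) two_ne_zero |>.1 ?_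
  rw [PiLp.norm_sq_eq_of_L2]
  exact sum_norm_diag_sq_le (z - consensus x)

theorem norm_sub_consensus_sq_eq (z : Estimates d) {m : Profile d} (hm : ∑ i, (z i - m) = 0)
    (c : Profile d) :
    ‖z - consensus c‖ ^ 2 = N * ‖m - c‖ ^ 2 + ‖z - consensus m‖ ^ 2 := by
  have h := sum_norm_sub_sq_eq_of_sum_sub_eq_zero (fun i => z i) hm c
  rw [Fintype.card_fin] at h
  rw [PiLp.norm_sq_eq_of_L2 _ (z - consensus c), PiLp.norm_sq_eq_of_L2 _ (z - consensus m)]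
  exact h

variable (J : ∀ _ : Fin N, Profile d → ℝ) {ε ι : ℝ} {xstar : Profile d}

theorem inner_diagProfile_sub_Ftil_ge
    (hmono : ∀ x y : Profile d, ⟪x - y, Fmap J x - Fmap J y⟫ ≥ ε * ‖x - y‖ ^ 2)
    (hFLip : ∀ x y : Profile d, ‖Fmap J x - Fmap J y‖ ≤ ι * ‖x - y‖)
    (hFtilLip : ∀ ψ φ : Estimates d, ‖Ftil J ψ - Ftil J φ‖ ≤ ι * ‖ψ - φ‖)
    (hxstar : Fmap J xstar = 0) (z : Estimates d) (m : Profile d) :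
    ε * ‖m - xstar‖ ^ 2 - ι * ‖z - consensus m‖ ^ 2 -
        2 * ι * (‖m - xstar‖ * ‖z - consensus m‖) ≤ ⟪diagProfile z - xstar, Ftil J z⟫ := by
  set A := ‖m - xstar‖
  set B := ‖z - consensus m‖
  have hS : ‖diagProfile z - m‖ ≤ B := norm_diagProfile_sub_le z m
  have hsplit : ⟪diagProfile z - xstar, Ftil J z⟫ =
      ⟪diagProfile z - xstar, Ftil J z - Fmap J m⟫ +
        ⟪diagProfile z - m, Fmap J m - Fmap J xstar⟫ +
        ⟪m - xstar, Fmap J m - Fmap J xstar⟫ := by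
    simp only [hxstar, sub_zero, inner_sub_left, inner_sub_right]
    ring
  have h₁ : ‖diagProfile z - xstar‖ * ‖Ftil J z - Fmap J m‖ ≤ (B + A) * (ι * B) :=
    mul_le_mul ((norm_sub_le_norm_sub_add_norm_sub _ m _).trans (by linarith))
      (hFtilLip z (consensus m)) (norm_nonneg _) (by positivity)
  have h₂ : ‖diagProfile z - m‖ * ‖Fmap J m - Fmap J xstar‖ ≤ B * (ι * A) :=
    mul_le_mul hS (hFLip m xstar) (norm_nonneg _) (norm_nonneg _)
  have h₃ := neg_le_of_abs_le <|
    abs_real_inner_le_norm (diagProfile z - xstar) (Ftil J z - Fmap J m)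
  have h₄ := neg_le_of_abs_le <|
    abs_real_inner_le_norm (diagProfile z - m) (Fmap J m - Fmap J xstar)
  linear_combination -hsplit + h₁ + h₂ + h₃ + h₄ + hmono m xstar

/-- Strong monotonicity of `F` controls the consensus component of `z - consensus xstar` and the
Dirichlet energy controls the disagreement component; the Lipschitz bounds absorb the cross
terms, which is where the coefficient `ε + 2ι + 4ι² / ε` comes from. -/
theorem mul_norm_sub_consensus_sq_le (hN : 0 < N) (hε : 0 < ε)
    (hmono : ∀ x y : Profile d, ⟪x - y, Fmap J x - Fmap J y⟫ ≥ ε * ‖x - y‖ ^ 2)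
    (hFLip : ∀ x y : Profile d, ‖Fmap J x - Fmap J y‖ ≤ ι * ‖x - y‖)
    (hFtilLip : ∀ ψ φ : Estimates d, ‖Ftil J ψ - Ftil J φ‖ ≤ ι * ‖ψ - φ‖)
    (hxstar : Fmap J xstar = 0) {a : Fin N → Fin N → ℝ} {k : ℝ}
    (hgap : ∀ δ : Estimates d, ∑ i, δ i = 0 →
      (ε + 2 * ι + 4 * ι ^ 2 / ε) * ‖δ‖ ^ 2 ≤ k * dirichletEnergy a δ)
    (z : Estimates d) :
    ε / (2 * N) * ‖z - consensus xstar‖ ^ 2 ≤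
      ⟪diagProfile z - xstar, Ftil J z⟫ + k / 2 * dirichletEnergy a z := by
  set m : Profile d := (N : ℝ)⁻¹ • ∑ i, z i
  have hmean : ∑ i, (z i - m) = 0 := by
    rw [Finset.sum_sub_distrib, Finset.sum_const, Finset.card_univ, Fintype.card_fin,
      ← Nat.cast_smul_eq_nsmul ℝ, smul_inv_smul₀ (by positivity), sub_self]
  set A := ‖m - xstar‖
  set B := ‖z - consensus m‖
  have hinner := inner_diagProfile_sub_Ftil_ge J hmono hFLip hFtilLip hxstar z m
  have hdisagree : (ε + 2 * ι + 4 * ι ^ 2 / ε) * B ^ 2 ≤ k * dirichletEnergy a z := by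
    refine (hgap _ ?_).trans_eq ?_
    · simpa [consensus] using hmean
    · simp [dirichletEnergy, consensus, sub_sub_sub_cancel_right]
  have hB : ε / (2 * N) * B ^ 2 ≤ ε / 2 * B ^ 2 := mul_le_mul_of_nonneg_right
    (div_le_div_of_nonneg_left hε.le two_pos (by linarith [(Nat.one_le_cast (α := ℝ)).2 hN]))
    (sq_nonneg B)
  have hsq : 0 ≤ ε / 2 * A ^ 2 - 2 * ι * (A * B) + 2 * ι ^ 2 / ε * B ^ 2 := by
    have : ε / 2 * A ^ 2 - 2 * ι * (A * B) + 2 * ι ^ 2 / ε * B ^ 2 =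
        (ε * A - 2 * ι * B) ^ 2 / (2 * ε) := by
      field_simp
      ring
    rw [this]
    positivity
  have hsplit : ε / (2 * N) * (N * A ^ 2 + B ^ 2) = ε / 2 * A ^ 2 + ε / (2 * N) * B ^ 2 := by
    field_simp
  rw [norm_sub_consensus_sq_eq z hmean xstar, hsplit]
  linear_combination hinner + hdisagree / 2 + hsq + hB

end Game

section ClosedLoop

variable {N : ℕ} {d : Fin N → ℕ}

theorem inner_toLp_update_zero (u : Profile d) (i : Fin N) (v : EuclideanSpace ℝ (Fin (d i))) :
    ⟪u, (WithLp.toLp 2 (Function.update (0 : Profile d) i v) : Profile d)⟫ = ⟪u i, v⟫ := by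
  rw [PiLp.inner_apply, Finset.sum_eq_single i (fun j _ hj => by simp [hj]) (by simp)]
  simp

def seekingField (J : ∀ _ : Fin N, Profile d → ℝ) (w : Fin N → Fin N → ℝ)
    (z : Estimates d) : Estimates d :=
  WithLp.toLp 2 fun i =>
    (WithLp.toLp 2 (Function.update (0 : Profile d) i (Ftil J z i)) : Profile d) +
      ∑ j, w i j • (z i - z j)

theorem inner_sub_consensus_seekingField (J : ∀ _ : Fin N, Profile d → ℝ)
    {w : Fin N → Fin N → ℝ} (hw : ∀ i j, w i j = w j i) (z : Estimates d)
    (xstar : Profile d) :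
    ⟪z - consensus xstar, seekingField J w z⟫ =
      ⟪diagProfile z - xstar, Ftil J z⟫ + dirichletEnergy w z / 2 := by
  have hdiff : dirichletEnergy w z = dirichletEnergy w fun i => z i - xstar := by
    simp [dirichletEnergy, sub_sub_sub_cancel_right]
  rw [hdiff, ← sum_sum_mul_inner_sub_eq_half_dirichletEnergy hw, PiLp.inner_apply,
    PiLp.inner_apply, ← Finset.sum_add_distrib]
  refine Finset.sum_congr rfl fun i _ => ?_
  simp only [seekingField, PiLp.toLp_apply, inner_add_right, inner_toLp_update_zero, inner_sum,
    real_inner_smul_right, sub_sub_sub_cancel_right]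
  rfl

theorem neg_mul_norm_sq_le_inner_seekingField (J : ∀ _ : Fin N, Profile d → ℝ) {ι : ℝ}
    (hFtilLip : ∀ ψ φ : Estimates d, ‖Ftil J ψ - Ftil J φ‖ ≤ ι * ‖ψ - φ‖)
    {xstar : Profile d} (hxstar : Fmap J xstar = 0) {w : Fin N → Fin N → ℝ}
    (hw : ∀ i j, w i j = w j i) (hw₀ : ∀ i j, 0 ≤ w i j) (z : Estimates d) :
    -(ι * ‖z - consensus xstar‖ ^ 2) ≤ ⟪z - consensus xstar, seekingField J w z⟫ := by
  have hF : ‖Ftil J z‖ ≤ ι * ‖z - consensus xstar‖ := by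
    simpa [show Ftil J (consensus xstar) = Fmap J xstar from rfl, hxstar] using
      hFtilLip z (consensus xstar)
  have hI := neg_le_of_abs_le (abs_real_inner_le_norm (diagProfile z - xstar) (Ftil J z))
  have hprod : ‖diagProfile z - xstar‖ * ‖Ftil J z‖ ≤
      ‖z - consensus xstar‖ * (ι * ‖z - consensus xstar‖) :=
    mul_le_mul (norm_diagProfile_sub_le z xstar) hF (norm_nonneg _) (norm_nonneg _)
  rw [inner_sub_consensus_seekingField J hw]
  nlinarith [dirichletEnergy_nonneg hw₀ (z : Fin N → Profile d)]

def lyapunov (xstar : Profile d) (γ : Fin N → Fin N → ℝ) (k : ℝ) (z : Estimates d)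
    (g : Fin N → Fin N → ℝ) : ℝ :=
  ‖z - consensus xstar‖ ^ 2 / 2 + ∑ i, ∑ j, (g i j - k) ^ 2 / (4 * γ i j)

theorem hasDerivAt_lyapunov (J : ∀ _ : Fin N, Profile d → ℝ) {a γ : Fin N → Fin N → ℝ}
    (hγ : ∀ i j, γ i j ≠ 0) {x : ℝ → Estimates d} {κ : Fin N → Fin N → ℝ → ℝ} {t μ : ℝ}
    (xstar : Profile d) (k : ℝ)
    (hx : HasDerivAt x (μ • -seekingField J (fun i j => κ i j t * a i j) (x t)) t)
    (hκ : ∀ i j, HasDerivAt (κ i j) (μ * (γ i j * a i j * ‖x t i - x t j‖ ^ 2)) t)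
    (hw : ∀ i j, κ i j t * a i j = κ j i t * a j i) :
    HasDerivAt (fun s => lyapunov xstar γ k (x s) fun i j => κ i j s)
      (-μ * (⟪diagProfile (x t) - xstar, Ftil J (x t)⟫ + k / 2 * dirichletEnergy a (x t)))
      t := by
  have hP := ((hx.sub_const (consensus xstar)).norm_sq).div_const 2
  have hQ := HasDerivAt.fun_sum (u := Finset.univ) fun i _ =>
    HasDerivAt.fun_sum (u := Finset.univ) fun j _ =>
      (((hκ i j).sub_const k).fun_pow 2).div_const (4 * γ i j)
  refine (hP.fun_add hQ).congr_deriv ?_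
  have hterm : ∀ i j, ((2 : ℕ) : ℝ) * (κ i j t - k) ^ (2 - 1) *
      (μ * (γ i j * a i j * ‖x t i - x t j‖ ^ 2)) / (4 * γ i j) =
      μ / 2 * (κ i j t * a i j * ‖x t i - x t j‖ ^ 2) -
        μ / 2 * k * (a i j * ‖x t i - x t j‖ ^ 2) := fun i j => by
    have := hγ i j
    field_simp
    ring
  simp only [hterm, Finset.sum_sub_distrib, ← Finset.mul_sum, real_inner_smul_right,
    inner_neg_right, inner_sub_consensus_seekingField J hw, dirichletEnergy]
  ring

end ClosedLoop

section PrescribedTime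

variable {c T : ℝ}

theorem hasDerivAt_prescribedTimeScale {t : ℝ} (ht : t < T) :
    HasDerivAt (fun s => c * s - Real.log (T - s)) (c + 1 / (T - t)) t := by
  have hlog := ((hasDerivAt_id t).const_sub T).log (sub_pos.2 ht).ne'
  refine (((hasDerivAt_id t).const_mul c).fun_sub hlog).congr_deriv ?_
  simp only [id]
  ring

theorem tendsto_prescribedTimeScale :
    Tendsto (fun s => c * s - Real.log (T - s)) (𝓝[<] T) atTop := by
  have hsub : Tendsto (fun s => T - s) (𝓝[<] T) (𝓝 0) := by
    simpa using ((continuous_sub_left T).tendsto T).mono_left (nhdsWithin_le_nhds (s := Iio T))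
  have hgap : Tendsto (fun s => T - s) (𝓝[<] T) (𝓝[>] 0) :=
    tendsto_nhdsWithin_iff.2
      ⟨hsub, eventually_nhdsWithin_of_forall fun s hs => mem_Ioi.2 (sub_pos.2 hs)⟩
  have hlin : Tendsto (fun s => c * s) (𝓝[<] T) (𝓝 (c * T)) :=
    ((continuous_const_mul c).tendsto T).mono_left nhdsWithin_le_nhds
  simpa [sub_eq_add_neg] using
    hlin.add_atTop (tendsto_neg_atBot_atTop.comp (Real.tendsto_log_nhdsGT_zero.comp hgap))

end PrescribedTime

section Lyapunov

variable {N : ℕ} {d : Fin N → ℕ} {γ : Fin N → Fin N → ℝ}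

theorem norm_sub_consensus_sq_le_lyapunov (hγ : ∀ i j, 0 < γ i j) (xstar : Profile d) (k : ℝ)
    (z : Estimates d) (g : Fin N → Fin N → ℝ) :
    ‖z - consensus xstar‖ ^ 2 ≤ 2 * lyapunov xstar γ k z g := by
  have : 0 ≤ ∑ i, ∑ j, (g i j - k) ^ 2 / (4 * γ i j) := Finset.sum_nonneg fun i _ =>
    Finset.sum_nonneg fun j _ => div_nonneg (sq_nonneg _) (by linarith [hγ i j])
  unfold lyapunov
  linarith

theorem lyapunov_nonneg (hγ : ∀ i j, 0 < γ i j) (xstar : Profile d) (k : ℝ) (z : Estimates d)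
    (g : Fin N → Fin N → ℝ) : 0 ≤ lyapunov xstar γ k z g := by
  nlinarith [norm_sub_consensus_sq_le_lyapunov hγ xstar k z g, sq_nonneg ‖z - consensus xstar‖]

theorem sq_sub_le_lyapunov (hγ : ∀ i j, 0 < γ i j) (xstar : Profile d) (k : ℝ)
    (z : Estimates d) (g : Fin N → Fin N → ℝ) (i j : Fin N) :
    (g i j - k) ^ 2 ≤ 4 * γ i j * lyapunov xstar γ k z g := by
  have hterm : ∀ i j, 0 ≤ (g i j - k) ^ 2 / (4 * γ i j) := fun i j =>
    div_nonneg (sq_nonneg _) (by linarith [hγ i j])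
  have hle : (g i j - k) ^ 2 / (4 * γ i j) ≤ lyapunov xstar γ k z g :=
    calc (g i j - k) ^ 2 / (4 * γ i j) ≤ ∑ j', (g i j' - k) ^ 2 / (4 * γ i j') :=
          Finset.single_le_sum (fun j' _ => hterm i j') (Finset.mem_univ j)
      _ ≤ ∑ i', ∑ j', (g i' j' - k) ^ 2 / (4 * γ i' j') :=
          Finset.single_le_sum (f := fun i' => ∑ j', (g i' j' - k) ^ 2 / (4 * γ i' j'))
            (fun i' _ => Finset.sum_nonneg fun j' _ => hterm i' j') (Finset.mem_univ i)
      _ ≤ lyapunov xstar γ k z g := le_add_of_nonneg_left (by positivity)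
  rwa [div_le_iff₀' (by linarith [hγ i j])] at hle

end Lyapunov

structure IsAdaptiveSeekingSolution {N : ℕ} {d : Fin N → ℕ}
    (J : ∀ _ : Fin N, Profile d → ℝ) (G : SimpleGraph (Fin N)) [DecidableRel G.Adj] (c T : ℝ)
    (γ : Fin N → Fin N → ℝ) (x : ℝ → Estimates d) (κ : Fin N → Fin N → ℝ → ℝ) : Prop where
  hasDerivAt_estimates : ∀ t ∈ Ico 0 T, HasDerivAt x
    ((c + 1 / (T - t)) • -seekingField J (fun i j => κ i j t * G.adjMatrix ℝ i j) (x t)) t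
  hasDerivAt_gains : ∀ i j, ∀ t ∈ Ico 0 T, HasDerivAt (κ i j)
    ((c + 1 / (T - t)) * (γ i j * G.adjMatrix ℝ i j * ‖x t i - x t j‖ ^ 2)) t
  gains_symm_zero : ∀ i j, κ i j 0 = κ j i 0
  gains_nonneg_zero : ∀ i j, 0 ≤ κ i j 0

namespace IsAdaptiveSeekingSolution

variable {N : ℕ} {d : Fin N → ℕ} {J : ∀ _ : Fin N, Profile d → ℝ}
  {G : SimpleGraph (Fin N)} [DecidableRel G.Adj] {c T : ℝ} {γ : Fin N → Fin N → ℝ}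
  {x : ℝ → Estimates d} {κ : Fin N → Fin N → ℝ → ℝ}

theorem gains_symm (h : IsAdaptiveSeekingSolution J G c T γ x κ)
    (hγ : ∀ i j, γ i j = γ j i) : ∀ t ∈ Ico 0 T, ∀ i j, κ i j t = κ j i t := fun t ht i j =>
  eqOn_Ico_of_hasDerivAt_eq (h.hasDerivAt_gains i j)
    (fun s hs => by
      simpa only [hγ, G.adjMatrix_comm, norm_sub_rev] using h.hasDerivAt_gains j i s hs)
    (h.gains_symm_zero i j) ht

theorem gains_monotoneOn (h : IsAdaptiveSeekingSolution J G c T γ x κ) (hc : 0 ≤ c)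
    (hγ : ∀ i j, 0 ≤ γ i j) (i j : Fin N) : MonotoneOn (κ i j) (Ico 0 T) :=
  monotoneOn_of_hasDerivAt_nonneg (convex_Ico 0 T) (h.hasDerivAt_gains i j) fun t ht => by
    have := sub_pos.2 ht.2; have := hγ i j; have := G.adjMatrix_nonneg i j
    positivity

theorem gains_nonneg (h : IsAdaptiveSeekingSolution J G c T γ x κ) (hc : 0 ≤ c)
    (hγ : ∀ i j, 0 ≤ γ i j) {t : ℝ} (ht : t ∈ Ico 0 T) (i j : Fin N) : 0 ≤ κ i j t :=
  (h.gains_nonneg_zero i j).trans <|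
    h.gains_monotoneOn hc hγ i j ⟨le_rfl, ht.1.trans_lt ht.2⟩ ht ht.1

theorem hasDerivAt_lyapunov (h : IsAdaptiveSeekingSolution J G c T γ x κ)
    (hγ : ∀ i j, γ i j = γ j i) (hγpos : ∀ i j, 0 < γ i j) (xstar : Profile d) (k : ℝ) :
    ∀ t ∈ Ico 0 T, HasDerivAt (fun s => lyapunov xstar γ k (x s) fun i j => κ i j s)
      (-(c + 1 / (T - t)) * (⟪diagProfile (x t) - xstar, Ftil J (x t)⟫ +
        k / 2 * dirichletEnergy (G.adjMatrix ℝ) (x t))) t := fun t ht =>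
  _root_.hasDerivAt_lyapunov J (fun i j => (hγpos i j).ne') xstar k (h.hasDerivAt_estimates t ht)
    (fun i j => h.hasDerivAt_gains i j t ht)
    fun i j => by rw [h.gains_symm hγ t ht i j, G.adjMatrix_comm]

variable {xstar : Profile d} {k r : ℝ}

theorem lyapunov_antitoneOn (h : IsAdaptiveSeekingSolution J G c T γ x κ) (hc : 0 ≤ c)
    (hγ : ∀ i j, γ i j = γ j i) (hγpos : ∀ i j, 0 < γ i j) (hr : 0 ≤ r)
    (hdiss : ∀ z : Estimates d, r * ‖z - consensus xstar‖ ^ 2 ≤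
      ⟪diagProfile z - xstar, Ftil J z⟫ + k / 2 * dirichletEnergy (G.adjMatrix ℝ) z) :
    AntitoneOn (fun t => lyapunov xstar γ k (x t) fun i j => κ i j t) (Ico 0 T) :=
  antitoneOn_of_hasDerivAt_nonpos (convex_Ico 0 T) (h.hasDerivAt_lyapunov hγ hγpos xstar k)
    fun t ht => by
      have hμ : 0 ≤ c + 1 / (T - t) := by have := sub_pos.2 ht.2; positivity
      have := (mul_nonneg hr (sq_nonneg ‖x t - consensus xstar‖)).trans (hdiss (x t))
      nlinarith

theorem exists_tendsto_gains (h : IsAdaptiveSeekingSolution J G c T γ x κ) (hT : 0 < T)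
    (hc : 0 ≤ c) (hγ : ∀ i j, γ i j = γ j i) (hγpos : ∀ i j, 0 < γ i j) (hr : 0 ≤ r)
    (hdiss : ∀ z : Estimates d, r * ‖z - consensus xstar‖ ^ 2 ≤
      ⟪diagProfile z - xstar, Ftil J z⟫ + k / 2 * dirichletEnergy (G.adjMatrix ℝ) z)
    (i j : Fin N) : ∃ l, Tendsto (κ i j) (𝓝[<] T) (𝓝 l) := by
  have hV := h.lyapunov_antitoneOn hc hγ hγpos hr hdiss
  refine exists_tendsto_nhdsLT_of_monotoneOn_Ico
    (B := k + √(4 * γ i j * lyapunov xstar γ k (x 0) fun i j => κ i j 0)) hT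
    (h.gains_monotoneOn hc (fun i j => (hγpos i j).le) i j) fun t ht => ?_
  have hsq := (sq_sub_le_lyapunov hγpos xstar k (x t) (fun i j => κ i j t) i j).trans
    (mul_le_mul_of_nonneg_left (hV ⟨le_rfl, hT⟩ ht ht.1) (by linarith [hγpos i j]))
  linarith [(le_abs_self _).trans (Real.abs_le_sqrt hsq)]

theorem tendsto_consensus (h : IsAdaptiveSeekingSolution J G c T γ x κ) (hT : 0 < T)
    (hc : 0 ≤ c) (hγ : ∀ i j, γ i j = γ j i) (hγpos : ∀ i j, 0 < γ i j) {ι : ℝ}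
    (hι : 0 ≤ ι) (hFtilLip : ∀ ψ φ : Estimates d, ‖Ftil J ψ - Ftil J φ‖ ≤ ι * ‖ψ - φ‖)
    (hxstar : Fmap J xstar = 0) (hr : 0 < r)
    (hdiss : ∀ z : Estimates d, r * ‖z - consensus xstar‖ ^ 2 ≤
      ⟪diagProfile z - xstar, Ftil J z⟫ + k / 2 * dirichletEnergy (G.adjMatrix ℝ) z) :
    Tendsto x (𝓝[<] T) (𝓝 (consensus xstar)) := by
  have hμ : ∀ t ∈ Ico 0 T, 0 ≤ c + 1 / (T - t) := fun t ht => by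
    have := sub_pos.2 ht.2; positivity
  have hV_anti := h.lyapunov_antitoneOn hc hγ hγpos hr.le hdiss
  set V := fun t => lyapunov xstar γ k (x t) fun i j => κ i j t
  have hV' : ∀ t ∈ Ico 0 T,
      -(c + 1 / (T - t)) * (⟪diagProfile (x t) - xstar, Ftil J (x t)⟫ +
        k / 2 * dirichletEnergy (G.adjMatrix ℝ) (x t)) ≤
      -(r * (c + 1 / (T - t)) * ‖x t - consensus xstar‖ ^ 2) := fun t ht => by
    nlinarith [mul_le_mul_of_nonneg_left (hdiss (x t)) (hμ t ht)]
  -- The gains are nonnegative, so only the gradient term can increase `‖x - consensus xstar‖²`,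
  -- at rate at most `2ι‖x - consensus xstar‖² ≤ 4ι V 0` in the rescaled time.
  have hP' : ∀ t ∈ Ico 0 T, 2 * ⟪x t - consensus xstar, (c + 1 / (T - t)) •
      -seekingField J (fun i j => κ i j t * G.adjMatrix ℝ i j) (x t)⟫ ≤
      4 * ι * V 0 * (c + 1 / (T - t)) := fun t ht => by
    have hw := neg_mul_norm_sq_le_inner_seekingField J hFtilLip hxstar
      (fun i j => by rw [h.gains_symm hγ t ht i j, G.adjMatrix_comm])
      (fun i j => mul_nonneg (h.gains_nonneg hc (fun i j => (hγpos i j).le) ht i j)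
        (G.adjMatrix_nonneg i j)) (x t)
    have hV0 : ‖x t - consensus xstar‖ ^ 2 ≤ 2 * V 0 :=
      (norm_sub_consensus_sq_le_lyapunov hγpos xstar k _ _).trans
        (by linarith [hV_anti ⟨le_rfl, hT⟩ ht ht.1])
    rw [real_inner_smul_right, inner_neg_right]
    nlinarith [mul_le_mul_of_nonneg_left hw (hμ t ht),
      mul_le_mul_of_nonneg_left hV0 (mul_nonneg hι (hμ t ht))]
  have hP := tendsto_zero_of_dissipation hT hr (fun t ht => hasDerivAt_prescribedTimeScale ht.2)
    hμ tendsto_prescribedTimeScale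
    (fun t ht => ((h.hasDerivAt_estimates t ht).sub_const _).norm_sq)
    hP' (fun _ _ => sq_nonneg _) (h.hasDerivAt_lyapunov hγ hγpos xstar k) hV'
    fun t _ => lyapunov_nonneg hγpos xstar k _ _
  rw [tendsto_iff_norm_sub_tendsto_zero]
  simpa [Real.sqrt_sq (norm_nonneg _)] using hP.sqrt

end IsAdaptiveSeekingSolution

theorem SimpleGraph.Connected.exists_mul_norm_sub_consensus_sq_le {N : ℕ} {d : Fin N → ℕ}
    {G : SimpleGraph (Fin N)} [DecidableRel G.Adj] (hG : G.Connected)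
    (J : ∀ _ : Fin N, Profile d → ℝ) {ε ι : ℝ} (hε : 0 < ε) (hι : 0 < ι)
    (hmono : ∀ x y : Profile d, ⟪x - y, Fmap J x - Fmap J y⟫ ≥ ε * ‖x - y‖ ^ 2)
    (hFLip : ∀ x y : Profile d, ‖Fmap J x - Fmap J y‖ ≤ ι * ‖x - y‖)
    (hFtilLip : ∀ ψ φ : Estimates d, ‖Ftil J ψ - Ftil J φ‖ ≤ ι * ‖ψ - φ‖)
    {xstar : Profile d} (hxstar : Fmap J xstar = 0) :
    ∃ k, ∀ z : Estimates d, ε / (2 * N) * ‖z - consensus xstar‖ ^ 2 ≤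
      ⟪diagProfile z - xstar, Ftil J z⟫ + k / 2 * dirichletEnergy (G.adjMatrix ℝ) z := by
  obtain ⟨lam, hlam, hgap⟩ := hG.exists_pos_mul_norm_sq_le_dirichletEnergy (E := Profile d)
  refine ⟨(ε + 2 * ι + 4 * ι ^ 2 / ε) / lam, mul_norm_sub_consensus_sq_le J
    (Fin.pos_iff_nonempty.2 hG.nonempty) hε hmono hFLip hFtilLip hxstar fun δ hδ => ?_⟩
  calc (ε + 2 * ι + 4 * ι ^ 2 / ε) * ‖δ‖ ^ 2
      = (ε + 2 * ι + 4 * ι ^ 2 / ε) / lam * (lam * ‖δ‖ ^ 2) := by field_simp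
    _ ≤ _ := mul_le_mul_of_nonneg_left (hgap δ hδ) (by positivity)

theorem prescribed_time_fully_distributed_NE_seeking_general
    {N : ℕ} {d : Fin N → ℕ}
    (J : ∀ _ : Fin N, (PiLp 2 fun i => EuclideanSpace ℝ (Fin (d i))) → ℝ)
    (ε ι : ℝ) (hε : 0 < ε) (hι : 0 < ι)
    (hmono : ∀ x y : PiLp 2 fun i => EuclideanSpace ℝ (Fin (d i)),
      (inner ℝ (x - y) (Fmap J x - Fmap J y) : ℝ) ≥ ε * ‖x - y‖ ^ 2)
    (hFLip : ∀ x y : PiLp 2 fun i => EuclideanSpace ℝ (Fin (d i)),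
      ‖Fmap J x - Fmap J y‖ ≤ ι * ‖x - y‖)
    (hFtilLip : ∀ ψ φ : PiLp 2 fun _ : Fin N => PiLp 2 fun i => EuclideanSpace ℝ (Fin (d i)),
      ‖Ftil J ψ - Ftil J φ‖ ≤ ι * ‖ψ - φ‖)
    (xstar : PiLp 2 fun i => EuclideanSpace ℝ (Fin (d i))) (hxstar : Fmap J xstar = 0)
    (G : SimpleGraph (Fin N)) [DecidableRel G.Adj] (hG : G.Connected)
    (c T : ℝ) (hc : 0 < c) (hT : 0 < T)
    (γ : Fin N → Fin N → ℝ) (hγsymm : ∀ i j, γ i j = γ j i) (hγpos : ∀ i j, 0 < γ i j)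
    (x : ℝ → PiLp 2 fun _ : Fin N => PiLp 2 fun i => EuclideanSpace ℝ (Fin (d i)))
    (κ : Fin N → Fin N → ℝ → ℝ)
    (hκ0symm : ∀ i j, κ i j 0 = κ j i 0) (hκ0nonneg : ∀ i j, 0 ≤ κ i j 0)
    (hx : ∀ t ∈ Set.Ico (0 : ℝ) T,
      HasDerivAt x ((c + 1 / (T - t)) •
        (-(show PiLp 2 (fun _ : Fin N => PiLp 2 fun i => EuclideanSpace ℝ (Fin (d i))) from
          WithLp.toLp 2 fun i =>
            (show PiLp 2 (fun i => EuclideanSpace ℝ (Fin (d i))) from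
              WithLp.toLp 2 (Function.update (0 : PiLp 2 fun i => EuclideanSpace ℝ (Fin (d i))) i
                (Ftil J (x t) i)))
            + ∑ j, (κ i j t * SimpleGraph.adjMatrix ℝ G i j) • (x t i - x t j)))) t)
    (hκ : ∀ i j, ∀ t ∈ Set.Ico (0 : ℝ) T,
      HasDerivAt (κ i j)
        ((c + 1 / (T - t)) * (γ i j * SimpleGraph.adjMatrix ℝ G i j * ‖x t i - x t j‖ ^ 2)) t) :
    Tendsto x (nhdsWithin T (Set.Ico 0 T))
      (nhds (show PiLp 2 (fun _ : Fin N => PiLp 2 fun i => EuclideanSpace ℝ (Fin (d i))) from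
        WithLp.toLp 2 fun _ => xstar)) ∧
    ∀ i j, MonotoneOn (κ i j) (Set.Ico 0 T) ∧
      ∃ l : ℝ, Tendsto (κ i j) (nhdsWithin T (Set.Ico 0 T)) (nhds l) := by
  have h : IsAdaptiveSeekingSolution J G c T γ x κ := ⟨hx, hκ, hκ0symm, hκ0nonneg⟩
  obtain ⟨k, hdiss⟩ :=
    hG.exists_mul_norm_sub_consensus_sq_le J hε hι hmono hFLip hFtilLip hxstar
  have hr : 0 < ε / (2 * N) := by
    have := Fin.pos_iff_nonempty.2 hG.nonempty
    positivity
  rw [nhdsWithin_Ico_eq_nhdsLT hT]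
  exact ⟨h.tendsto_consensus hT hc.le hγsymm hγpos hι.le hFtilLip hxstar hr hdiss, fun i j =>
    ⟨h.gains_monotoneOn hc.le (fun i j => (hγpos i j).le) i j,
      h.exists_tendsto_gains hT hc.le hγsymm hγpos hr.le hdiss i j⟩⟩

/-- **Theorem 3** (prescribed-time fully distributed NE seeking with adaptive gains over a
fixed connected graph): all players' estimates converge to the consensus point at the Nash
equilibrium in the prescribed time `T`, and each dynamic gain `κ i j` is monotone
nondecreasing on `[0, T)` and converges to a finite limit as `t → T⁻`. -/
theorem prescribed_time_fully_distributed_NE_seeking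
    {N : ℕ} (hN : 1 ≤ N) {d : Fin N → ℕ}
    (J : ∀ _ : Fin N, (PiLp 2 fun i => EuclideanSpace ℝ (Fin (d i))) → ℝ)
    (hJ : ∀ i, Differentiable ℝ (J i))
    (ε ι : ℝ) (hε : 0 < ε) (hι : 0 < ι)
    (hmono : ∀ x y : PiLp 2 fun i => EuclideanSpace ℝ (Fin (d i)),
      (inner ℝ (x - y) (Fmap J x - Fmap J y) : ℝ) ≥ ε * ‖x - y‖ ^ 2)
    (hFLip : ∀ x y : PiLp 2 fun i => EuclideanSpace ℝ (Fin (d i)),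
      ‖Fmap J x - Fmap J y‖ ≤ ι * ‖x - y‖)
    (hFtilLip : ∀ ψ φ : PiLp 2 fun _ : Fin N => PiLp 2 fun i => EuclideanSpace ℝ (Fin (d i)),
      ‖Ftil J ψ - Ftil J φ‖ ≤ ι * ‖ψ - φ‖)
    (xstar : PiLp 2 fun i => EuclideanSpace ℝ (Fin (d i))) (hxstar : Fmap J xstar = 0)
    (G : SimpleGraph (Fin N)) [DecidableRel G.Adj] (hG : G.Connected)
    (c T : ℝ) (hc : 0 < c) (hT : 0 < T)
    (γ : Fin N → Fin N → ℝ) (hγsymm : ∀ i j, γ i j = γ j i) (hγpos : ∀ i j, 0 < γ i j)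
    (x : ℝ → PiLp 2 fun _ : Fin N => PiLp 2 fun i => EuclideanSpace ℝ (Fin (d i)))
    (κ : Fin N → Fin N → ℝ → ℝ)
    (hκ0symm : ∀ i j, κ i j 0 = κ j i 0) (hκ0nonneg : ∀ i j, 0 ≤ κ i j 0)
    (hx : ∀ t ∈ Set.Ico (0 : ℝ) T,
      HasDerivAt x ((c + 1 / (T - t)) •
        (-(show PiLp 2 (fun _ : Fin N => PiLp 2 fun i => EuclideanSpace ℝ (Fin (d i))) from
          WithLp.toLp 2 fun i =>
            (show PiLp 2 (fun i => EuclideanSpace ℝ (Fin (d i))) from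
              WithLp.toLp 2 (Function.update (0 : PiLp 2 fun i => EuclideanSpace ℝ (Fin (d i))) i
                (Ftil J (x t) i)))
            + ∑ j, (κ i j t * SimpleGraph.adjMatrix ℝ G i j) • (x t i - x t j)))) t)
    (hκ : ∀ i j, ∀ t ∈ Set.Ico (0 : ℝ) T,
      HasDerivAt (κ i j)
        ((c + 1 / (T - t)) * (γ i j * SimpleGraph.adjMatrix ℝ G i j * ‖x t i - x t j‖ ^ 2)) t) :
    Tendsto x (nhdsWithin T (Set.Ico 0 T))
      (nhds (show PiLp 2 (fun _ : Fin N => PiLp 2 fun i => EuclideanSpace ℝ (Fin (d i))) from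
        WithLp.toLp 2 fun _ => xstar)) ∧
    ∀ i j, MonotoneOn (κ i j) (Set.Ico 0 T) ∧
      ∃ l : ℝ, Tendsto (κ i j) (nhdsWithin T (Set.Ico 0 T)) (nhds l) :=
  prescribed_time_fully_distributed_NE_seeking_general J ε ι hε hι hmono hFLip hFtilLip xstar hxstar
    G hG c T hc hT γ hγsymm hγpos x κ hκ0symm hκ0nonneg hx hκ
end
end

section
/- (Quantitative decay rate for the prescribed-time algorithm, eq. (36) of the paper.) Let c > 0 and T > 0, and let x : ℝ → (Fin N → X) satisfy, for every t ∈ [0, T), HasDerivAt x ((c + 1/(T − t)) • (−𝒜 (x t))) t. Then there exists μ > 0, depending only on ε, ι, λ₂, κ, and N, such that for all t ∈ [0, T), ‖x t − ψ̃‖ ≤ ((T − t)/T) ^ μ * ‖x 0 − ψ̃‖ (with the L² product norm on Fin N → X). -/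
noncomputable section

open Filter

/-!
Split `ψ - ψ̃` into the deviation `xbar - x*` of the players' average estimate `xbar` from the
equilibrium and the disagreement `ψ - xbar` of the estimates among themselves. Strong
monotonicity of `F` controls the first part, the algebraic connectivity `λ₂` of the graph the
second, and the cross terms are bounded through the Lipschitz constant `ι`; the gain condition on
`κ` makes the resulting quadratic form in the two norms positive definite. Hence `𝒜` is strongly
monotone at `ψ̃`, `⟪ψ - ψ̃, 𝒜 ψ⟫ ≥ η ‖ψ - ψ̃‖²`, so along the flow
`d/dt ‖x - ψ̃‖² ≤ -2η/(T - t) ‖x - ψ̃‖²`, and `‖x t - ψ̃‖² ((T - t)/T)^(-2η)` is nonincreasing.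
-/

open Finset

theorem exists_pos_mul_sq_add_sq_le {A B C : ℝ} (hA : 0 < A) (hC : 0 < C) (h : B ^ 2 < A * C) :
    ∃ η > 0, ∀ p b : ℝ, η * (p ^ 2 + b ^ 2) ≤ A * p ^ 2 - 2 * B * p * b + C * b ^ 2 := by
  -- det / trace bounds the smaller eigenvalue of the form's matrix from below
  set η := (A * C - B ^ 2) / (A + C)
  have hη : η * (A + C) = A * C - B ^ 2 := div_mul_cancel₀ _ (by positivity)
  have hAη : 0 < A - η := by nlinarith [sq_nonneg B]
  refine ⟨η, div_pos (by linarith) (by linarith), fun p b => ?_⟩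
  nlinarith [sq_nonneg ((A - η) * p - B * b), sq_nonneg (η * b), sq_nonneg b, sq_nonneg p]

section Mean

variable {ι E : Type*} [Fintype ι] [NormedAddCommGroup E] [InnerProductSpace ℝ E]

def mean (v : ι → E) : E := (Fintype.card ι : ℝ)⁻¹ • ∑ i, v i

theorem card_smul_mean (v : ι → E) : (Fintype.card ι : ℝ) • mean v = ∑ i, v i := by
  rcases isEmpty_or_nonempty ι with hι | hι
  · simp
  · exact smul_inv_smul₀ (by positivity) _

theorem sum_sub_mean (v : ι → E) : ∑ i, (v i - mean v) = 0 := by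
  rw [sum_sub_distrib, sum_const, card_univ, ← Nat.cast_smul_eq_nsmul ℝ, card_smul_mean, sub_self]

theorem sum_norm_sub_sq_eq (v : ι → E) (a : E) :
    ∑ i, ‖v i - a‖ ^ 2 = Fintype.card ι * ‖mean v - a‖ ^ 2 + ∑ i, ‖v i - mean v‖ ^ 2 := by
  have hsplit : ∀ i, ‖v i - a‖ ^ 2
      = ‖v i - mean v‖ ^ 2 + 2 * inner ℝ (v i - mean v) (mean v - a) + ‖mean v - a‖ ^ 2 := by
    intro i
    rw [← norm_add_sq_real, sub_add_sub_cancel]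
  simp only [hsplit, sum_add_distrib, ← mul_sum, ← sum_inner, sum_sub_mean, inner_zero_left,
    mul_zero, add_zero, sum_const, card_univ, nsmul_eq_mul]
  ring

theorem norm_sub_toLp_const_sq (ψ : PiLp 2 fun _ : ι => E) (a : E) :
    ‖ψ - WithLp.toLp 2 fun _ => a‖ ^ 2
      = Fintype.card ι * ‖mean ψ - a‖ ^ 2 + ‖ψ - WithLp.toLp 2 fun _ => mean ψ‖ ^ 2 := by
  simp only [PiLp.norm_sq_eq_of_L2, PiLp.sub_apply]
  exact sum_norm_sub_sq_eq _ a

end Mean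

namespace SimpleGraph

variable {V E : Type*} [Fintype V] [DecidableEq V] [NormedAddCommGroup E] [InnerProductSpace ℝ E]
  (G : SimpleGraph V) [DecidableRel G.Adj]

theorem sum_lapMatrix_row (i : V) : ∑ j, G.lapMatrix ℝ i j = 0 := by
  simpa [Matrix.mulVec, dotProduct] using congrFun (G.lapMatrix_mulVec_const_eq_zero (R := ℝ)) i

theorem sum_lapMatrix_col (j : V) : ∑ i, G.lapMatrix ℝ i j = 0 := by
  simpa only [(G.isSymm_lapMatrix ℝ).apply j] using G.sum_lapMatrix_row j

theorem sum_lapMatrix_mul_inner_add_const (u v : V → E) (a b : E) :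
    ∑ i, ∑ j, G.lapMatrix ℝ i j * inner ℝ (u i + a) (v j + b)
      = ∑ i, ∑ j, G.lapMatrix ℝ i j * inner ℝ (u i) (v j) := by
  have hconst : ∑ i, ∑ j, G.lapMatrix ℝ i j * inner ℝ a (v j) = 0 := by
    rw [sum_comm]
    simp only [← sum_mul, sum_lapMatrix_col, zero_mul, sum_const_zero]
  simp only [inner_add_left, inner_add_right, mul_add, sum_add_distrib, ← sum_mul,
    sum_lapMatrix_row, zero_mul, add_zero]
  rw [hconst, add_zero]

end SimpleGraph

section OwnActions

variable {ι : Type*} {β : ι → Type*}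

def ownActions (ψ : PiLp 2 fun _ : ι => PiLp 2 β) : PiLp 2 β := WithLp.toLp 2 fun k => ψ k k

@[simp]
theorem ownActions_const (x : PiLp 2 β) : ownActions (WithLp.toLp 2 fun _ : ι => x) = x := rfl

variable [∀ i, NormedAddCommGroup (β i)]

theorem ownActions_sub (ψ φ : PiLp 2 fun _ : ι => PiLp 2 β) :
    ownActions (ψ - φ) = ownActions ψ - ownActions φ := rfl

variable [Fintype ι]

theorem norm_ownActions_le (ψ : PiLp 2 fun _ : ι => PiLp 2 β) : ‖ownActions ψ‖ ≤ ‖ψ‖ := by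
  refine (sq_le_sq₀ (norm_nonneg _) (norm_nonneg _)).mp ?_
  simp only [ownActions, PiLp.norm_sq_eq_of_L2 _ ψ, PiLp.norm_sq_eq_of_L2 _ (ψ _),
    PiLp.norm_sq_eq_of_L2]
  exact sum_le_sum fun k _ =>
    single_le_sum (f := fun l => ‖ψ k l‖ ^ 2) (fun l _ => sq_nonneg _) (mem_univ k)

variable [∀ i, InnerProductSpace ℝ (β i)]

theorem inner_toLp_update_zero_s6 [DecidableEq ι] (u : PiLp 2 β) (i : ι) (v : β i) :
    inner ℝ u (WithLp.toLp 2 (Function.update (0 : PiLp 2 β) i v)) = inner ℝ (u i) v := by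
  rw [PiLp.inner_apply, sum_eq_single i]
  · simp
  · intro j _ hj
    simp [Function.update_of_ne hj]
  · simp

theorem inner_ownActions_ge {F : PiLp 2 β → PiLp 2 β}
    {F' : (PiLp 2 fun _ : ι => PiLp 2 β) → PiLp 2 β} {ε ℓ : ℝ}
    (hF' : ∀ x, F' (WithLp.toLp 2 fun _ => x) = F x)
    (hmono : ∀ x y, inner ℝ (x - y) (F x - F y) ≥ ε * ‖x - y‖ ^ 2)
    (hFLip : ∀ x y, ‖F x - F y‖ ≤ ℓ * ‖x - y‖)
    (hF'Lip : ∀ ψ φ, ‖F' ψ - F' φ‖ ≤ ℓ * ‖ψ - φ‖)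
    {xstar : PiLp 2 β} (hxstar : F xstar = 0) (ψ : PiLp 2 fun _ : ι => PiLp 2 β)
    (xbar : PiLp 2 β) :
    ε * ‖xbar - xstar‖ ^ 2 - 2 * ℓ * ‖xbar - xstar‖ * ‖ψ - WithLp.toLp 2 fun _ => xbar‖
        - ℓ * ‖ψ - WithLp.toLp 2 fun _ => xbar‖ ^ 2
      ≤ inner ℝ (ownActions (ψ - WithLp.toLp 2 fun _ => xstar)) (F' ψ) := by
  set ψbar : PiLp 2 fun _ : ι => PiLp 2 β := WithLp.toLp 2 fun _ => xbar
  set p := ‖xbar - xstar‖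
  set b := ‖ψ - ψbar‖
  set δ := ownActions (ψ - ψbar)
  have hw : ownActions (ψ - WithLp.toLp 2 fun _ => xstar) = δ + (xbar - xstar) := by
    simp only [δ, ψbar, ownActions_sub, ownActions_const]
    abel
  have hsplit : inner ℝ (δ + (xbar - xstar)) (F' ψ)
      = inner ℝ (δ + (xbar - xstar)) (F' ψ - F' ψbar) + inner ℝ δ (F xbar)
        + inner ℝ (xbar - xstar) (F xbar) := by
    simp only [ψbar, inner_sub_right, hF', inner_add_left]
    ring
  have hcons : ε * p ^ 2 ≤ inner ℝ (xbar - xstar) (F xbar) := by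
    simpa [hxstar] using hmono xbar xstar
  have hFbar : ‖F xbar‖ ≤ ℓ * p := by simpa [hxstar] using hFLip xbar xstar
  have hδ : ‖δ‖ ≤ b := norm_ownActions_le _
  have hdev : -(b * (ℓ * p)) ≤ inner ℝ δ (F xbar) :=
    neg_le_of_abs_le <| (abs_real_inner_le_norm _ _).trans <|
      mul_le_mul hδ hFbar (norm_nonneg _) (norm_nonneg _)
  have hw_norm : ‖δ + (xbar - xstar)‖ ≤ b + p := (norm_add_le _ _).trans (by linarith)
  have hcross : -((b + p) * (ℓ * b)) ≤ inner ℝ (δ + (xbar - xstar)) (F' ψ - F' ψbar) :=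
    neg_le_of_abs_le <| (abs_real_inner_le_norm _ _).trans <|
      mul_le_mul hw_norm (hF'Lip ψ ψbar) (norm_nonneg _) ((norm_nonneg _).trans hw_norm)
  rw [hw, hsplit]
  linear_combination hcons + hdev + hcross

end OwnActions

theorem inner_Amap {N : ℕ} {d : Fin N → ℕ}
    (J : ∀ _ : Fin N, (PiLp 2 fun i => EuclideanSpace ℝ (Fin (d i))) → ℝ)
    (G : SimpleGraph (Fin N)) [DecidableRel G.Adj] (κ : ℝ)
    (φ ψ : PiLp 2 fun _ : Fin N => PiLp 2 fun i => EuclideanSpace ℝ (Fin (d i))) :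
    inner ℝ φ (Amap J G κ ψ)
      = inner ℝ (ownActions φ) (Ftil J ψ)
        + κ * ∑ i, ∑ j, G.lapMatrix ℝ i j * inner ℝ (φ i) (ψ j) := by
  simp only [Amap, PiLp.inner_apply (x := φ), inner_add_right,
    inner_toLp_update_zero_s6, real_inner_smul_right, inner_sum, sum_add_distrib, mul_sum]
  rfl

theorem exists_pos_mul_norm_sq_le_inner_Amap {N : ℕ} (hN : 1 ≤ N) {d : Fin N → ℕ}
    (J : ∀ _ : Fin N, (PiLp 2 fun i => EuclideanSpace ℝ (Fin (d i))) → ℝ)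
    (G : SimpleGraph (Fin N)) [DecidableRel G.Adj]
    {ε ι lam₂ κ : ℝ} (hε : 0 < ε) (hι : 0 < ι) (hlam₂ : 0 < lam₂)
    (hmono : ∀ x y : PiLp 2 fun i => EuclideanSpace ℝ (Fin (d i)),
      (inner ℝ (x - y) (Fmap J x - Fmap J y) : ℝ) ≥ ε * ‖x - y‖ ^ 2)
    (hFLip : ∀ x y : PiLp 2 fun i => EuclideanSpace ℝ (Fin (d i)),
      ‖Fmap J x - Fmap J y‖ ≤ ι * ‖x - y‖)
    (hFtilLip : ∀ ψ φ : PiLp 2 fun _ : Fin N => PiLp 2 fun i => EuclideanSpace ℝ (Fin (d i)),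
      ‖Ftil J ψ - Ftil J φ‖ ≤ ι * ‖ψ - φ‖)
    (hlap : ∀ v : Fin N → PiLp 2 fun i => EuclideanSpace ℝ (Fin (d i)),
      ∑ i, v i = 0 →
      ∑ i, ∑ j, SimpleGraph.lapMatrix ℝ G i j * (inner ℝ (v i) (v j) : ℝ) ≥ lam₂ * ∑ i, ‖v i‖ ^ 2)
    {xstar : PiLp 2 fun i => EuclideanSpace ℝ (Fin (d i))} (hxstar : Fmap J xstar = 0)
    (hκgain : κ > (ι ^ 2 / ε + ι) / lam₂) :
    ∃ η > 0, ∀ ψ : PiLp 2 fun _ : Fin N => PiLp 2 fun i => EuclideanSpace ℝ (Fin (d i)),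
      η * ‖ψ - WithLp.toLp 2 fun _ => xstar‖ ^ 2
        ≤ inner ℝ (ψ - WithLp.toLp 2 fun _ => xstar) (Amap J G κ ψ) := by
  have hgain : ι ^ 2 / ε + ι < κ * lam₂ := (div_lt_iff₀ hlam₂).mp hκgain
  have hκ : 0 < κ := lt_trans (by positivity) hκgain
  have hdisc : ι ^ 2 < ε * (κ * lam₂ - ι) := by
    rw [← div_lt_iff₀' hε]
    linarith
  obtain ⟨η, hη, hquad⟩ :=
    exists_pos_mul_sq_add_sq_le hε (by nlinarith [div_pos (pow_pos hι 2) hε]) hdisc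
  refine ⟨η / N, by positivity, fun ψ => ?_⟩
  set xbar := mean ψ
  set p := ‖xbar - xstar‖
  set b := ‖ψ - WithLp.toLp 2 fun _ => xbar‖
  have hnorm : ‖ψ - WithLp.toLp 2 fun _ => xstar‖ ^ 2 = N * p ^ 2 + b ^ 2 := by
    simpa using norm_sub_toLp_const_sq ψ xstar
  have hgame := inner_ownActions_ge (β := fun i => EuclideanSpace ℝ (Fin (d i)))
    (F' := fun ψ => Ftil J ψ) (fun _ => rfl) hmono hFLip hFtilLip hxstar ψ xbar
  have hconsensus : lam₂ * b ^ 2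
      ≤ ∑ i, ∑ j, G.lapMatrix ℝ i j * inner ℝ (ψ i - xstar) (ψ j) := by
    have hdecomp := G.sum_lapMatrix_mul_inner_add_const (fun i => ψ i - xbar)
      (fun i => ψ i - xbar) (xbar - xstar) xbar
    simp only [sub_add_sub_cancel, sub_add_cancel] at hdecomp
    rw [PiLp.norm_sq_eq_of_L2]
    simpa [hdecomp] using hlap _ (sum_sub_mean ψ)
  have hshrink : η / N * (N * p ^ 2 + b ^ 2) ≤ η * (p ^ 2 + b ^ 2) := by
    have hN' : (1 : ℝ) ≤ N := by exact_mod_cast hN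
    rw [mul_add, ← mul_assoc, div_mul_cancel₀ _ (by positivity)]
    nlinarith [div_le_self hη.le hN', sq_nonneg b]
  calc η / N * ‖ψ - WithLp.toLp 2 fun _ => xstar‖ ^ 2
      ≤ η * (p ^ 2 + b ^ 2) := by rw [hnorm]; exact hshrink
    _ ≤ ε * p ^ 2 - 2 * ι * p * b + (κ * lam₂ - ι) * b ^ 2 := hquad p b
    _ ≤ inner ℝ (ψ - WithLp.toLp 2 fun _ => xstar) (Amap J G κ ψ) := by
      rw [inner_Amap]
      simp only [PiLp.sub_apply]
      nlinarith [mul_le_mul_of_nonneg_left hconsensus hκ.le]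

section PrescribedTimeComparison

open Set

theorem le_rpow_mul_of_hasDerivAt_le {f f' : ℝ → ℝ} {k T : ℝ} (hT : 0 < T)
    (hf : ∀ t ∈ Ico 0 T, HasDerivAt f (f' t) t)
    (hf' : ∀ t ∈ Ico 0 T, f' t ≤ -(k / (T - t) * f t)) {t : ℝ} (ht : t ∈ Ico 0 T) :
    f t ≤ ((T - t) / T) ^ k * f 0 := by
  have hr : ∀ s < T, 0 < (T - s) / T := fun s hs => div_pos (sub_pos.mpr hs) hT
  have hweight : ∀ s < T,
      HasDerivAt (fun s => ((T - s) / T) ^ (-k)) (k / (T - s) * ((T - s) / T) ^ (-k)) s := by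
    intro s hs
    refine ((((hasDerivAt_id s).const_sub T).div_const T).rpow_const (p := -k)
      (Or.inl (hr s hs).ne')).congr_deriv ?_
    rw [id, Real.rpow_sub_one (hr s hs).ne']
    field_simp [(sub_pos.mpr hs).ne']
  have hanti : AntitoneOn (fun s => f s * ((T - s) / T) ^ (-k)) (Ico 0 T) := by
    have hderiv : ∀ s ∈ Ico 0 T, HasDerivAt (fun s => f s * ((T - s) / T) ^ (-k))
        (f' s * ((T - s) / T) ^ (-k) + f s * (k / (T - s) * ((T - s) / T) ^ (-k))) s :=
      fun s hs => (hf s hs).mul (hweight s hs.2)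
    refine antitoneOn_of_hasDerivWithinAt_nonpos (convex_Ico 0 T)
      (fun s hs => (hderiv s hs).continuousAt.continuousWithinAt)
      (fun s hs => (hderiv s (interior_subset hs)).hasDerivWithinAt) fun s hs => ?_
    have hs := interior_subset hs
    have hpos := Real.rpow_pos_of_pos (hr s hs.2) (-k)
    nlinarith [hf' s hs]
  have hmono := hanti ⟨le_rfl, hT⟩ ht ht.1
  simp only [sub_zero, div_self hT.ne', Real.one_rpow, mul_one] at hmono
  calc f t = f t * ((T - t) / T) ^ (-k) * ((T - t) / T) ^ k := by
        rw [Real.rpow_neg (hr t ht.2).le, mul_assoc,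
          inv_mul_cancel₀ (Real.rpow_pos_of_pos (hr t ht.2) k).ne', mul_one]
    _ ≤ f 0 * ((T - t) / T) ^ k :=
      mul_le_mul_of_nonneg_right hmono (Real.rpow_nonneg (hr t ht.2).le k)
    _ = ((T - t) / T) ^ k * f 0 := mul_comm _ _

theorem norm_le_rpow_mul_of_hasDerivAt {E : Type*} [NormedAddCommGroup E]
    [InnerProductSpace ℝ E] {z z' : ℝ → E} {k T : ℝ} (hT : 0 < T)
    (hz : ∀ t ∈ Ico 0 T, HasDerivAt z (z' t) t)
    (hz' : ∀ t ∈ Ico 0 T, inner ℝ (z t) (z' t) ≤ -(k / (T - t) * ‖z t‖ ^ 2)) {t : ℝ}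
    (ht : t ∈ Ico 0 T) :
    ‖z t‖ ≤ ((T - t) / T) ^ k * ‖z 0‖ := by
  have hr : 0 ≤ (T - t) / T := div_nonneg (sub_nonneg.mpr ht.2.le) hT.le
  have hsq := le_rpow_mul_of_hasDerivAt_le (f := fun s => ‖z s‖ ^ 2) (k := 2 * k) hT
    (fun s hs => (hz s hs).norm_sq) (fun s hs => by
      linarith [hz' s hs, show 2 * k / (T - s) * ‖z s‖ ^ 2 = 2 * (k / (T - s) * ‖z s‖ ^ 2) by
        ring]) ht
  rw [mul_comm 2 k, Real.rpow_mul hr, Real.rpow_two, ← mul_pow] at hsq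
  exact (sq_le_sq₀ (norm_nonneg _) (by positivity)).mp hsq

end PrescribedTimeComparison

theorem prescribed_time_decay_rate_general
    {N : ℕ} (hN : 1 ≤ N) {d : Fin N → ℕ}
    (J : ∀ _ : Fin N, (PiLp 2 fun i => EuclideanSpace ℝ (Fin (d i))) → ℝ)
    (G : SimpleGraph (Fin N)) [DecidableRel G.Adj]
    (ε ι lam₂ κ : ℝ) (hε : 0 < ε) (hι : 0 < ι) (hlam₂ : 0 < lam₂)
    (hmono : ∀ x y : PiLp 2 fun i => EuclideanSpace ℝ (Fin (d i)),
      (inner ℝ (x - y) (Fmap J x - Fmap J y) : ℝ) ≥ ε * ‖x - y‖ ^ 2)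
    (hFLip : ∀ x y : PiLp 2 fun i => EuclideanSpace ℝ (Fin (d i)),
      ‖Fmap J x - Fmap J y‖ ≤ ι * ‖x - y‖)
    (hFtilLip : ∀ ψ φ : PiLp 2 fun _ : Fin N => PiLp 2 fun i => EuclideanSpace ℝ (Fin (d i)),
      ‖Ftil J ψ - Ftil J φ‖ ≤ ι * ‖ψ - φ‖)
    (hlap : ∀ v : Fin N → PiLp 2 fun i => EuclideanSpace ℝ (Fin (d i)),
      ∑ i, v i = 0 →
      ∑ i, ∑ j, SimpleGraph.lapMatrix ℝ G i j * (inner ℝ (v i) (v j) : ℝ) ≥ lam₂ * ∑ i, ‖v i‖ ^ 2)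
    (xstar : PiLp 2 fun i => EuclideanSpace ℝ (Fin (d i))) (hxstar : Fmap J xstar = 0)
    (hκgain : κ > (ι ^ 2 / ε + ι) / lam₂)
    (c T : ℝ) (hc : 0 < c) (hT : 0 < T)
    (x : ℝ → PiLp 2 fun _ : Fin N => PiLp 2 fun i => EuclideanSpace ℝ (Fin (d i)))
    (hx : ∀ t ∈ Set.Ico (0 : ℝ) T,
      HasDerivAt x ((c + 1 / (T - t)) • (-(Amap J G κ (x t)))) t) :
    ∃ μ : ℝ, 0 < μ ∧ ∀ t ∈ Set.Ico (0 : ℝ) T,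
      ‖x t - (show PiLp 2 (fun _ : Fin N => PiLp 2 fun i => EuclideanSpace ℝ (Fin (d i))) from WithLp.toLp 2 fun _ => xstar)‖ ≤ ((T - t) / T) ^ μ * ‖x 0 - (show PiLp 2 (fun _ : Fin N => PiLp 2 fun i => EuclideanSpace ℝ (Fin (d i))) from WithLp.toLp 2 fun _ => xstar)‖ := by
  obtain ⟨η, hη, hcoercive⟩ := exists_pos_mul_norm_sq_le_inner_Amap hN J G hε hι hlam₂ hmono
    hFLip hFtilLip hlap hxstar hκgain
  refine ⟨η, hη, fun t ht => norm_le_rpow_mul_of_hasDerivAt hT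
    (fun s hs => (hx s hs).sub_const _) (fun s hs => ?_) ht⟩
  have hq : 0 < 1 / (T - s) := one_div_pos.mpr (sub_pos.mpr hs.2)
  have hrate := mul_le_mul (by linarith : 1 / (T - s) ≤ c + 1 / (T - s)) (hcoercive (x s))
    (by positivity) (by linarith)
  rw [real_inner_smul_right, inner_neg_right]
  linarith [show η / (T - s) * ‖x s - WithLp.toLp 2 fun _ => xstar‖ ^ 2
    = 1 / (T - s) * (η * ‖x s - WithLp.toLp 2 fun _ => xstar‖ ^ 2) by ring]

/-- **Quantitative decay rate** for the prescribed-time algorithm (eq. (36)):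
`‖x t − ψ̃‖ ≤ ((T − t)/T) ^ μ * ‖x 0 − ψ̃‖` for some `μ > 0`. -/
theorem prescribed_time_decay_rate
    {N : ℕ} (hN : 1 ≤ N) {d : Fin N → ℕ}
    (J : ∀ _ : Fin N, (PiLp 2 fun i => EuclideanSpace ℝ (Fin (d i))) → ℝ)
    (hJ : ∀ i, Differentiable ℝ (J i))
    (G : SimpleGraph (Fin N)) [DecidableRel G.Adj] (hG : G.Connected)
    (ε ι lam₂ κ : ℝ) (hε : 0 < ε) (hι : 0 < ι) (hlam₂ : 0 < lam₂)
    (hmono : ∀ x y : PiLp 2 fun i => EuclideanSpace ℝ (Fin (d i)),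
      (inner ℝ (x - y) (Fmap J x - Fmap J y) : ℝ) ≥ ε * ‖x - y‖ ^ 2)
    (hFLip : ∀ x y : PiLp 2 fun i => EuclideanSpace ℝ (Fin (d i)),
      ‖Fmap J x - Fmap J y‖ ≤ ι * ‖x - y‖)
    (hFtilLip : ∀ ψ φ : PiLp 2 fun _ : Fin N => PiLp 2 fun i => EuclideanSpace ℝ (Fin (d i)),
      ‖Ftil J ψ - Ftil J φ‖ ≤ ι * ‖ψ - φ‖)
    (hlap : ∀ v : Fin N → PiLp 2 fun i => EuclideanSpace ℝ (Fin (d i)),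
      ∑ i, v i = 0 →
      ∑ i, ∑ j, SimpleGraph.lapMatrix ℝ G i j * (inner ℝ (v i) (v j) : ℝ) ≥ lam₂ * ∑ i, ‖v i‖ ^ 2)
    (xstar : PiLp 2 fun i => EuclideanSpace ℝ (Fin (d i))) (hxstar : Fmap J xstar = 0)
    (hκgain : κ > (ι ^ 2 / ε + ι) / lam₂)
    (c T : ℝ) (hc : 0 < c) (hT : 0 < T)
    (x : ℝ → PiLp 2 fun _ : Fin N => PiLp 2 fun i => EuclideanSpace ℝ (Fin (d i)))
    (hx : ∀ t ∈ Set.Ico (0 : ℝ) T,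
      HasDerivAt x ((c + 1 / (T - t)) • (-(Amap J G κ (x t)))) t) :
    ∃ μ : ℝ, 0 < μ ∧ ∀ t ∈ Set.Ico (0 : ℝ) T,
      ‖x t - (show PiLp 2 (fun _ : Fin N => PiLp 2 fun i => EuclideanSpace ℝ (Fin (d i))) from WithLp.toLp 2 fun _ => xstar)‖ ≤ ((T - t) / T) ^ μ * ‖x 0 - (show PiLp 2 (fun _ : Fin N => PiLp 2 fun i => EuclideanSpace ℝ (Fin (d i))) from WithLp.toLp 2 fun _ => xstar)‖ :=
  prescribed_time_decay_rate_general hN J G ε ι lam₂ κ hε hι hlam₂ hmono hFLip hFtilLip hlap xstar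
    hxstar hκgain c T hc hT x hx
end
end

section
/- (Master Lyapunov inequality, eq. (19)/(L8) of the paper: strong monotonicity of the augmented game map at the consensus NE.) Under the stated assumptions there exists μ > 0 such that for every ψ : Fin N → X, ∑ i, ⟪ψ i − x*, 𝒜 ψ i⟫ ≥ μ * ∑ i, ‖ψ i − x*‖². -/
noncomputable section

open Filter

/-! Write `ψ = 𝟙 ⊗ x̄ + W` with `x̄` the average of the estimates, so that `∑ i, W i = 0`,
and put `s = ‖x̄ - x*‖`, `t = ‖W‖`. The Laplacian ignores the consensus component, so the
coupling term is at least `κ λ₂ t²`. The gradient term is `⟪x̂ - x*, F̃ ψ⟫` with `x̂` the profile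
of each player's own actions; strong monotonicity at `x̄`, and the Lipschitz bounds for the
perturbations `x̂ - x̄` and `F̃ ψ - F x̄` (both of size at most `t`), give at least
`ε s² - 2 ι s t - ι t²`. The gain condition makes the resulting quadratic form in `(s, t)`
positive definite, and `∑ i, ‖ψ i - x*‖² = N s² + t²`. -/

open Finset RealInnerProductSpace

theorem exists_pos_mul_sq_add_sq_le_s16 {a b c : ℝ} (ha : 0 < a) (hdisc : b ^ 2 < a * c) :
    ∃ μ > 0, ∀ s t : ℝ, μ * (s ^ 2 + t ^ 2) ≤ a * s ^ 2 + 2 * b * s * t + c * t ^ 2 := by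
  have hc : 0 < c := pos_of_mul_pos_right (by nlinarith [sq_nonneg b]) ha.le
  refine ⟨(a * c - b ^ 2) / (a + c), div_pos (by linarith) (by linarith), fun s t => ?_⟩
  rw [div_mul_eq_mul_div, div_le_iff₀ (by linarith)]
  -- `(a s² + 2 b s t + c t²)(a + c) - (a c - b²)(s² + t²) = (a s + b t)² + (b s + c t)²`
  nlinarith [sq_nonneg (a * s + b * t), sq_nonneg (b * s + c * t)]

theorem div_add_one_mul_le {μ a b : ℝ} (hμ : 0 ≤ μ) (n : ℕ) (ha : 0 ≤ a) (hb : 0 ≤ b) :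
    μ / (n + 1) * (n * a + b) ≤ μ * (a + b) := by
  rw [div_mul_eq_mul_div, div_le_iff₀ (by positivity)]
  nlinarith [mul_nonneg hμ ha, mul_nonneg (mul_nonneg hμ n.cast_nonneg) hb]

theorem sum_sub_mean_eq_zero {M V : Type*} [AddCommGroup M] [Module ℝ M] [Fintype V] (ψ : V → M) :
    ∑ i, (ψ i - (Fintype.card V : ℝ)⁻¹ • ∑ j, ψ j) = 0 := by
  rcases (Fintype.card V).eq_zero_or_pos with h | h
  · simp [Fintype.card_eq_zero_iff.mp h]
  · rw [sum_sub_distrib, sum_const, card_univ, ← Nat.cast_smul_eq_nsmul ℝ, smul_smul,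
      mul_inv_cancel₀ (by positivity), one_smul, sub_self]

section InnerProductSpace

variable {E : Type*} [NormedAddCommGroup E] [InnerProductSpace ℝ E] {V : Type*} [Fintype V]

theorem sum_norm_add_sq_of_sum_eq_zero {W : V → E} (hW : ∑ i, W i = 0) (c : E) :
    ∑ i, ‖W i + c‖ ^ 2 = Fintype.card V * ‖c‖ ^ 2 + ∑ i, ‖W i‖ ^ 2 := by
  simp only [norm_add_sq_real, sum_add_distrib, ← mul_sum, ← sum_inner, hW,
    inner_zero_left, mul_zero, add_zero, sum_const, card_univ, nsmul_eq_mul]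
  ring

theorem SimpleGraph.sum_lapMatrix_mul_inner_sub_const [DecidableEq V]
    (G : SimpleGraph V) [DecidableRel G.Adj] (u v : V → E) (a b : E) :
    ∑ i, ∑ j, G.lapMatrix ℝ i j * ⟪u i - a, v j - b⟫ =
      ∑ i, ∑ j, G.lapMatrix ℝ i j * ⟪u i, v j⟫ := by
  have hrow (i : V) : ∑ j, G.lapMatrix ℝ i j = 0 := by
    simpa [Matrix.mulVec, dotProduct] using congrFun (G.lapMatrix_mulVec_const_eq_zero (R := ℝ)) i
  have hcol (j : V) : ∑ i, G.lapMatrix ℝ i j = 0 := by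
    simpa only [(G.isSymm_lapMatrix (R := ℝ)).apply j] using hrow j
  simp only [inner_sub_left, inner_sub_right, mul_sub, sum_sub_distrib, ← sum_mul, hrow, zero_mul,
    sub_zero]
  rw [sum_comm (f := fun i j => G.lapMatrix ℝ i j * ⟪a, v j⟫)]
  simp only [← sum_mul, hcol, zero_mul, sum_const_zero, sub_zero]

theorem le_inner_sub_of_perturbation {a x y u g : E} {ε ι t : ℝ}
    (hmono : ε * ‖x - y‖ ^ 2 ≤ ⟪x - y, u⟫) (hu : ‖u‖ ≤ ι * ‖x - y‖)
    (hg : ‖g - u‖ ≤ ι * t) (ha : ‖a - x‖ ≤ t) :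
    ε * ‖x - y‖ ^ 2 - 2 * ι * ‖x - y‖ * t - ι * t ^ 2 ≤ ⟪a - y, g⟫ := by
  have ht : 0 ≤ t := (norm_nonneg _).trans ha
  have hay : ‖a - y‖ ≤ t + ‖x - y‖ := by
    simpa only [sub_add_sub_cancel] using (norm_add_le (a - x) (x - y)).trans (by linarith)
  have hsplit : ⟪a - y, g⟫ = ⟪x - y, u⟫ + ⟪a - x, u⟫ + ⟪a - y, g - u⟫ := by
    rw [inner_sub_right, ← inner_add_left, sub_add_sub_cancel']
    ring
  have hax : -(t * (ι * ‖x - y‖)) ≤ ⟪a - x, u⟫ :=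
    (neg_le_neg (mul_le_mul ha hu (norm_nonneg _) ht)).trans
      (neg_le_of_abs_le (abs_real_inner_le_norm _ _))
  have hgu : -((t + ‖x - y‖) * (ι * t)) ≤ ⟪a - y, g - u⟫ :=
    (neg_le_neg (mul_le_mul hay hg (norm_nonneg _) (by positivity))).trans
      (neg_le_of_abs_le (abs_real_inner_le_norm _ _))
  rw [hsplit]
  linarith

end InnerProductSpace

def PiLp.diag {ι : Type*} {β : ι → Type*} (φ : PiLp 2 fun _ : ι => PiLp 2 β) : PiLp 2 β :=
  WithLp.toLp 2 fun i => φ i i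

theorem PiLp.norm_diag_le {ι : Type*} [Fintype ι] {β : ι → Type*}
    [∀ i, SeminormedAddCommGroup (β i)] (φ : PiLp 2 fun _ : ι => PiLp 2 β) :
    ‖PiLp.diag φ‖ ≤ ‖φ‖ := by
  refine (sq_le_sq₀ (norm_nonneg _) (norm_nonneg _)).mp ?_
  rw [PiLp.norm_sq_eq_of_L2, PiLp.norm_sq_eq_of_L2]
  gcongr with i
  exact PiLp.norm_apply_le (φ i) i

theorem PiLp.inner_toLp_update_zero_right {ι : Type*} [Fintype ι] [DecidableEq ι]
    {β : ι → Type*} [∀ i, NormedAddCommGroup (β i)] [∀ i, InnerProductSpace ℝ (β i)]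
    (v : PiLp 2 β) (i : ι) (w : β i) :
    ⟪v, WithLp.toLp 2 (Function.update (0 : PiLp 2 β) i w)⟫ = ⟪v i, w⟫ := by
  rw [PiLp.inner_apply, sum_eq_single i (fun j _ hj => by simp [Function.update_of_ne hj])
    (fun h => absurd (mem_univ i) h)]
  simp

section Game

variable {N : ℕ} {d : Fin N → ℕ}
  (J : ∀ _ : Fin N, (PiLp 2 fun i => EuclideanSpace ℝ (Fin (d i))) → ℝ)

theorem Ftil_const (x : PiLp 2 fun i => EuclideanSpace ℝ (Fin (d i))) :
    Ftil J (WithLp.toLp 2 fun _ => x) = Fmap J x :=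
  rfl

theorem sum_inner_Amap (G : SimpleGraph (Fin N)) [DecidableRel G.Adj] (κ : ℝ)
    (ψ : PiLp 2 fun _ : Fin N => PiLp 2 fun i => EuclideanSpace ℝ (Fin (d i)))
    (x : PiLp 2 fun i => EuclideanSpace ℝ (Fin (d i))) :
    ∑ i, ⟪ψ i - x, Amap J G κ ψ i⟫ =
      ⟪PiLp.diag ψ - x, Ftil J ψ⟫ + κ * ∑ i, ∑ j, G.lapMatrix ℝ i j * ⟪ψ i - x, ψ j⟫ := by
  simp only [Amap, PiLp.toLp_apply, inner_add_right, PiLp.inner_toLp_update_zero_right,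
    real_inner_smul_right, inner_sum, sum_add_distrib, ← mul_sum]
  rw [PiLp.inner_apply]
  rfl

end Game

theorem augmented_map_strongly_monotone_at_NE_general
    {N : ℕ} {d : Fin N → ℕ}
    (J : ∀ _ : Fin N, (PiLp 2 fun i => EuclideanSpace ℝ (Fin (d i))) → ℝ)
    (G : SimpleGraph (Fin N)) [DecidableRel G.Adj]
    (ε ι lam₂ κ : ℝ) (hε : 0 < ε) (hι : 0 < ι) (hlam₂ : 0 < lam₂)
    (hmono : ∀ x y : PiLp 2 fun i => EuclideanSpace ℝ (Fin (d i)),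
      (inner ℝ (x - y) (Fmap J x - Fmap J y) : ℝ) ≥ ε * ‖x - y‖ ^ 2)
    (hFLip : ∀ x y : PiLp 2 fun i => EuclideanSpace ℝ (Fin (d i)),
      ‖Fmap J x - Fmap J y‖ ≤ ι * ‖x - y‖)
    (hFtilLip : ∀ ψ φ : PiLp 2 fun _ : Fin N => PiLp 2 fun i => EuclideanSpace ℝ (Fin (d i)),
      ‖Ftil J ψ - Ftil J φ‖ ≤ ι * ‖ψ - φ‖)
    (hlap : ∀ v : Fin N → PiLp 2 fun i => EuclideanSpace ℝ (Fin (d i)),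
      ∑ i, v i = 0 →
      ∑ i, ∑ j, SimpleGraph.lapMatrix ℝ G i j * (inner ℝ (v i) (v j) : ℝ) ≥ lam₂ * ∑ i, ‖v i‖ ^ 2)
    (xstar : PiLp 2 fun i => EuclideanSpace ℝ (Fin (d i))) (hxstar : Fmap J xstar = 0)
    (hκgain : κ > (ι ^ 2 / ε + ι) / lam₂)
    :
    ∃ μ : ℝ, 0 < μ ∧
      ∀ ψ : PiLp 2 fun _ : Fin N => PiLp 2 fun i => EuclideanSpace ℝ (Fin (d i)),
        ∑ i, (inner ℝ (ψ i - xstar) (Amap J G κ ψ i) : ℝ) ≥ μ * ∑ i, ‖ψ i - xstar‖ ^ 2 := by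
  have hκ : 0 ≤ κ := le_of_lt (lt_trans (by positivity) hκgain)
  have hdisc : (-ι) ^ 2 < ε * (κ * lam₂ - ι) := by
    rw [gt_iff_lt, div_lt_iff₀ hlam₂, lt_sub_iff_add_lt.symm, div_lt_iff₀' hε] at hκgain
    linarith
  obtain ⟨μ, hμ, hq⟩ := exists_pos_mul_sq_add_sq_le_s16 hε hdisc
  refine ⟨μ / (N + 1), by positivity, fun ψ => ?_⟩
  set xbar := (N : ℝ)⁻¹ • ∑ j, ψ j
  set W : PiLp 2 fun _ : Fin N => PiLp 2 fun i => EuclideanSpace ℝ (Fin (d i)) :=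
    ψ - WithLp.toLp 2 fun _ => xbar
  have hW : ∑ i, W i = 0 := by
    simp only [W, PiLp.sub_apply]
    simpa only [Fintype.card_fin] using sum_sub_mean_eq_zero ψ
  have hgrad : ε * ‖xbar - xstar‖ ^ 2 - 2 * ι * ‖xbar - xstar‖ * ‖W‖ - ι * ‖W‖ ^ 2 ≤
      ⟪PiLp.diag ψ - xstar, Ftil J ψ⟫ := by
    refine le_inner_sub_of_perturbation (u := Fmap J xbar) ?_ ?_ ?_ ?_
    · simpa only [hxstar, sub_zero, ge_iff_le] using hmono xbar xstar
    · simpa only [hxstar, sub_zero] using hFLip xbar xstar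
    · have h := hFtilLip ψ (WithLp.toLp 2 fun _ => xbar)
      rwa [Ftil_const] at h
    · exact PiLp.norm_diag_le W
  have hlapW : lam₂ * ‖W‖ ^ 2 ≤ ∑ i, ∑ j, G.lapMatrix ℝ i j * ⟪ψ i - xstar, ψ j⟫ :=
    calc lam₂ * ‖W‖ ^ 2 ≤ ∑ i, ∑ j, G.lapMatrix ℝ i j * ⟪W i, W j⟫ := by
          rw [PiLp.norm_sq_eq_of_L2]; exact hlap W hW
      _ = ∑ i, ∑ j, G.lapMatrix ℝ i j * ⟪ψ i, ψ j⟫ :=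
          G.sum_lapMatrix_mul_inner_sub_const ψ ψ xbar xbar
      _ = ∑ i, ∑ j, G.lapMatrix ℝ i j * ⟪ψ i - xstar, ψ j⟫ := by
          simpa only [sub_zero] using (G.sum_lapMatrix_mul_inner_sub_const ψ ψ xstar 0).symm
  have hnorm : ∑ i, ‖ψ i - xstar‖ ^ 2 = N * ‖xbar - xstar‖ ^ 2 + ‖W‖ ^ 2 := by
    simpa [W, PiLp.norm_sq_eq_of_L2] using sum_norm_add_sq_of_sum_eq_zero hW (xbar - xstar)
  rw [sum_inner_Amap, hnorm, ge_iff_le]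
  linarith [hq ‖xbar - xstar‖ ‖W‖, mul_le_mul_of_nonneg_left hlapW hκ,
    div_add_one_mul_le hμ.le N (sq_nonneg ‖xbar - xstar‖) (sq_nonneg ‖W‖)]

/-- **Master Lyapunov inequality** (eq. (19)/(L8)): the augmented game map is strongly
monotone at the consensus Nash equilibrium. -/
theorem augmented_map_strongly_monotone_at_NE
    {N : ℕ} (hN : 1 ≤ N) {d : Fin N → ℕ}
    (J : ∀ _ : Fin N, (PiLp 2 fun i => EuclideanSpace ℝ (Fin (d i))) → ℝ)
    (hJ : ∀ i, Differentiable ℝ (J i))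
    (G : SimpleGraph (Fin N)) [DecidableRel G.Adj] (hG : G.Connected)
    (ε ι lam₂ κ : ℝ) (hε : 0 < ε) (hι : 0 < ι) (hlam₂ : 0 < lam₂)
    (hmono : ∀ x y : PiLp 2 fun i => EuclideanSpace ℝ (Fin (d i)),
      (inner ℝ (x - y) (Fmap J x - Fmap J y) : ℝ) ≥ ε * ‖x - y‖ ^ 2)
    (hFLip : ∀ x y : PiLp 2 fun i => EuclideanSpace ℝ (Fin (d i)),
      ‖Fmap J x - Fmap J y‖ ≤ ι * ‖x - y‖)
    (hFtilLip : ∀ ψ φ : PiLp 2 fun _ : Fin N => PiLp 2 fun i => EuclideanSpace ℝ (Fin (d i)),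
      ‖Ftil J ψ - Ftil J φ‖ ≤ ι * ‖ψ - φ‖)
    (hlap : ∀ v : Fin N → PiLp 2 fun i => EuclideanSpace ℝ (Fin (d i)),
      ∑ i, v i = 0 →
      ∑ i, ∑ j, SimpleGraph.lapMatrix ℝ G i j * (inner ℝ (v i) (v j) : ℝ) ≥ lam₂ * ∑ i, ‖v i‖ ^ 2)
    (xstar : PiLp 2 fun i => EuclideanSpace ℝ (Fin (d i))) (hxstar : Fmap J xstar = 0)
    (hκgain : κ > (ι ^ 2 / ε + ι) / lam₂)
    :
    ∃ μ : ℝ, 0 < μ ∧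
      ∀ ψ : PiLp 2 fun _ : Fin N => PiLp 2 fun i => EuclideanSpace ℝ (Fin (d i)),
        ∑ i, (inner ℝ (ψ i - xstar) (Amap J G κ ψ i) : ℝ) ≥ μ * ∑ i, ‖ψ i - xstar‖ ^ 2 :=
  augmented_map_strongly_monotone_at_NE_general J G ε ι lam₂ κ hε hι hlam₂ hmono hFLip hFtilLip hlap
    xstar hxstar hκgain
end
end
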